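/- arXiv:hep-th/0201045 — 6 statements merged into one kernel-verified Lean document; each statement's English description precedes it below -/
import Mathlib

section
/- Residue identity for G^{(-)}: under the same setup, G_j^{(-)} := Σ_{k=1}^n [sinh η/(sinh(ξ_k - λ_j) sinh(ξ_k - λ_j - η))] ∏_{a=1}^n sinh(ξ_k - λ_a) / ∏_{a≠k} sinh(ξ_k - ξ_a) = - ∏_{a=1}^n sinh(λ_a - λ_j - η)/sinh(ξ_a - λ_j - η). -/
open Complex Finset

open Polynomial
set_option maxHeartbeats 1000000

lemma sinh_sub_form (u w : ℂ) :
    sinh (u - w) = (exp (2*u) - exp (2*w)) / (2 * exp (u + w)) := by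
  have hs : sinh (u - w) = (exp (u - w) - exp (-(u - w))) / 2 := by
    linear_combination (Complex.two_sinh (x := u - w)) / 2
  have h1 : exp (2*u) = exp (u - w) * exp (u + w) := by rw [← Complex.exp_add]; ring_nf
  have h2 : exp (2*w) = exp (-(u - w)) * exp (u + w) := by rw [← Complex.exp_add]; ring_nf
  rw [hs, h1, h2]
  have := Complex.exp_ne_zero (u + w)
  field_simp

lemma frac_aux (S0 A B C V U P Q T L XK : ℂ) (hA : A ≠ 0) (hB : B ≠ 0) (hC : C ≠ 0)
    (hV : V ≠ 0) (hU : U ≠ 0) (hQ : Q ≠ 0) (hT : T ≠ 0) (hL : L ≠ 0) :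
    (S0 - 1) / (2 * A) / ((V / (2 * B * C)) * (U / (2 * B * (C * A)))) *
        ((V / (2 * B * C) * (P / (T * L))) / (Q / (T * XK)))
      = (S0 - 1) * C * (B * XK) / L * (P / (U * Q)) := by
  simp only [div_mul_div_comm, div_div_eq_mul_div, div_div, mul_div_assoc', div_mul_eq_mul_div]
  rw [div_eq_div_iff (by simp [hA,hB,hC,hV,hU,hQ,hT,hL, mul_ne_zero])
    (by simp [hL,hU,hQ, mul_ne_zero])]
  ring

lemma key_lagrange (n : ℕ) (X : Fin n → ℂ) (hX : ∀ a b : Fin n, a ≠ b → X a ≠ X b)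
    (μ : ℂ) (hμ : ∀ a, X a ≠ μ) (P : Polynomial ℂ) (hP : P.degree < n) :
    ∑ k : Fin n, P.eval (X k) / ((X k - μ) * ∏ a ∈ univ.erase k, (X k - X a))
      = - (P.eval μ / ∏ a : Fin n, (μ - X a)) := by
  have hinj : Set.InjOn X (univ : Finset (Fin n)) := fun a _ b _ h => by
    by_contra hab; exact hX a b hab h
  have hx : ∀ i ∈ (univ : Finset (Fin n)), μ ≠ X i := fun i _ => (hμ i).symm
  have hPi := Lagrange.eq_interpolate (v := X) hinj
    (by rw [card_univ, Fintype.card_fin]; exact hP)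
  have heval := Lagrange.eval_interpolate_not_at_node (s := univ) (v := X)
    (fun i => P.eval (X i)) (x := μ) hx
  rw [← hPi] at heval
  have hnodal : Polynomial.eval μ (Lagrange.nodal univ X) = ∏ a, (μ - X a) :=
    Lagrange.eval_nodal
  have hne : (∏ a : Fin n, (μ - X a)) ≠ 0 :=
    prod_ne_zero_iff.mpr fun a _ => sub_ne_zero_of_ne (hμ a).symm
  rw [hnodal] at heval
  have hsum : ∑ i : Fin n, Lagrange.nodalWeight univ X i * (μ - X i)⁻¹ * P.eval (X i)
      = P.eval μ / ∏ a, (μ - X a) := by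
    rw [eq_div_iff hne, mul_comm]
    exact heval.symm
  rw [← hsum, ← Finset.sum_neg_distrib]
  refine Finset.sum_congr rfl fun k _ => ?_
  rw [Lagrange.nodalWeight, prod_inv_distrib]
  have h1 : X k - μ = -(μ - X k) := by ring
  rw [h1, neg_mul, div_neg, div_eq_mul_inv, mul_inv]
  ring

/-- Residue identity (B.4) with the minus sign:
`G_j⁻ = ∑_k [sinh η/(sinh(ξ_k-λ_j) sinh(ξ_k-λ_j-η))] ∏_a sinh(ξ_k-λ_a) / ∏_{a≠k} sinh(ξ_k-ξ_a)
      = - ∏_a sinh(λ_a-λ_j-η)/sinh(ξ_a-λ_j-η)`. -/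
theorem stmt_5 (η : ℂ) (n : ℕ) (hn : 1 ≤ n) (ξ lam : Fin n → ℂ) (j : Fin n)
    (hξ : ∀ a b : Fin n, a ≠ b → sinh (ξ a - ξ b) ≠ 0)
    (hk : ∀ k : Fin n, sinh (ξ k - lam j) ≠ 0)
    (hkη : ∀ k : Fin n, sinh (ξ k - lam j - η) ≠ 0) :
    ∑ k : Fin n,
        sinh η / (sinh (ξ k - lam j) * sinh (ξ k - lam j - η))
          * ((∏ a : Fin n, sinh (ξ k - lam a))
              / ∏ a ∈ univ.erase k, sinh (ξ k - ξ a))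
      = - ∏ a : Fin n, sinh (lam a - lam j - η) / sinh (ξ a - lam j - η) := by
  have hF := sinh_sub_form
  have h1 : ∀ i : Fin n, sinh (ξ i - lam j - η)
      = (exp (2*ξ i) - exp (2*(lam j + η))) / (2 * exp (ξ i) * (exp (lam j) * exp η)) := by
    intro i
    rw [sub_sub, hF (ξ i) (lam j + η), Complex.exp_add, Complex.exp_add, mul_assoc]
  have h2 : ∀ i a : Fin n, sinh (ξ i - lam a)
      = (exp (2*ξ i) - exp (2*lam a)) / (2 * exp (ξ i) * exp (lam a)) := by
    intro i a
    rw [hF (ξ i) (lam a), Complex.exp_add, mul_assoc]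
  have h3 : ∀ a : Fin n, sinh (lam a - lam j - η)
      = (exp (2*lam a) - exp (2*(lam j + η))) / (2 * exp (lam a) * (exp (lam j) * exp η)) := by
    intro a
    rw [sub_sub, hF (lam a) (lam j + η), Complex.exp_add, Complex.exp_add, mul_assoc]
  have h4 : sinh η = (exp (2*η) - 1) / (2 * exp η) := by
    have := hF η 0
    simpa using this
  -- nonvanishing facts
  have hxμ : ∀ i : Fin n, exp (2*ξ i) - exp (2*(lam j + η)) ≠ 0 := fun i h =>
    hkη i (by rw [h1 i, h, zero_div])
  have hxm : ∀ i : Fin n, exp (2*ξ i) - exp (2*lam j) ≠ 0 := fun i h =>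
    hk i (by rw [h2 i j, h, zero_div])
  have hxx : ∀ a b : Fin n, a ≠ b → exp (2*ξ a) - exp (2*ξ b) ≠ 0 := fun a b hab h =>
    hξ a b hab (by rw [hF (ξ a) (ξ b), h, zero_div])
  have hterm : ∀ k : Fin n,
      sinh η / (sinh (ξ k - lam j) * sinh (ξ k - lam j - η))
          * ((∏ a : Fin n, sinh (ξ k - lam a))
              / ∏ a ∈ univ.erase k, sinh (ξ k - ξ a))
      = ((exp (2*η) - 1) * exp (lam j) * (∏ a, exp (ξ a)) / ∏ a ∈ univ.erase j, exp (lam a))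
        * ((∏ a ∈ univ.erase j, (exp (2*ξ k) - exp (2*lam a)))
            / ((exp (2*ξ k) - exp (2*(lam j + η)))
                * ∏ a ∈ univ.erase k, (exp (2*ξ k) - exp (2*ξ a)))) := by
    intro k
    have hsplit : (∏ a : Fin n, sinh (ξ k - lam a))
        = sinh (ξ k - lam j) * ∏ a ∈ univ.erase j, sinh (ξ k - lam a) :=
      (mul_prod_erase univ _ (mem_univ j)).symm
    have eL : ∏ a ∈ univ.erase j, sinh (ξ k - lam a)
        = (∏ a ∈ univ.erase j, (exp (2*ξ k) - exp (2*lam a)))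
          / ((2 * exp (ξ k))^(n-1) * ∏ a ∈ univ.erase j, exp (lam a)) := by
      calc ∏ a ∈ univ.erase j, sinh (ξ k - lam a)
          = ∏ a ∈ univ.erase j,
              ((exp (2*ξ k) - exp (2*lam a)) / (2 * exp (ξ k) * exp (lam a))) :=
            prod_congr rfl fun a _ => h2 k a
        _ = (∏ a ∈ univ.erase j, (exp (2*ξ k) - exp (2*lam a)))
              / ∏ a ∈ univ.erase j, (2 * exp (ξ k) * exp (lam a)) := prod_div_distrib _ _
        _ = _ := by
            rw [prod_mul_distrib, prod_const, card_erase_of_mem (mem_univ j), card_univ,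
              Fintype.card_fin]
    have eX : ∏ a ∈ univ.erase k, sinh (ξ k - ξ a)
        = (∏ a ∈ univ.erase k, (exp (2*ξ k) - exp (2*ξ a)))
          / ((2 * exp (ξ k))^(n-1) * ∏ a ∈ univ.erase k, exp (ξ a)) := by
      calc ∏ a ∈ univ.erase k, sinh (ξ k - ξ a)
          = ∏ a ∈ univ.erase k,
              ((exp (2*ξ k) - exp (2*ξ a)) / (2 * exp (ξ k) * exp (ξ a))) :=
            prod_congr rfl fun a _ => by rw [hF (ξ k) (ξ a), Complex.exp_add, mul_assoc]
        _ = (∏ a ∈ univ.erase k, (exp (2*ξ k) - exp (2*ξ a)))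
              / ∏ a ∈ univ.erase k, (2 * exp (ξ k) * exp (ξ a)) := prod_div_distrib _ _
        _ = _ := by
            rw [prod_mul_distrib, prod_const, card_erase_of_mem (mem_univ k), card_univ,
              Fintype.card_fin]
    have hXsplit : (∏ a, exp (ξ a)) = exp (ξ k) * ∏ a ∈ univ.erase k, exp (ξ a) :=
      (mul_prod_erase univ _ (mem_univ k)).symm
    rw [hsplit, eL, eX, h4, h2 k j, h1 k, hXsplit]
    exact frac_aux _ _ _ _ _ _ _ _ _ _ _
      (Complex.exp_ne_zero η) (Complex.exp_ne_zero (ξ k)) (Complex.exp_ne_zero (lam j))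
      (hxm k) (hxμ k)
      (prod_ne_zero_iff.mpr fun a ha => hxx k a (mem_erase.mp ha).1.symm)
      (pow_ne_zero _ (mul_ne_zero two_ne_zero (Complex.exp_ne_zero _)))
      (prod_ne_zero_iff.mpr fun a _ => Complex.exp_ne_zero _)
  -- apply the Lagrange key lemma
  have hxx' : ∀ a b : Fin n, a ≠ b → exp (2*ξ a) ≠ exp (2*ξ b) :=
    fun a b hab => sub_ne_zero.mp (hxx a b hab)
  have hμ' : ∀ a : Fin n, exp (2*ξ a) ≠ exp (2*(lam j + η)) :=
    fun a => sub_ne_zero.mp (hxμ a)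
  have hdeg : (Lagrange.nodal (univ.erase j) (fun a => exp (2*lam a))).degree < (n : ℕ) := by
    rw [Lagrange.degree_nodal, card_erase_of_mem (mem_univ j), card_univ, Fintype.card_fin]
    exact_mod_cast Nat.sub_lt hn Nat.one_pos
  have hkey := key_lagrange n (fun a => exp (2*ξ a)) hxx' (exp (2*(lam j + η))) hμ'
    (Lagrange.nodal (univ.erase j) (fun a => exp (2*lam a))) hdeg
  simp only [Lagrange.eval_nodal] at hkey
  -- denominators for the final step
  have hDx : (∏ a : Fin n, (exp (2*(lam j + η)) - exp (2*ξ a))) ≠ 0 :=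
    prod_ne_zero_iff.mpr fun a _ => fun h => hxμ a (by linear_combination -h)
  have hL : (∏ a ∈ univ.erase j, exp (lam a)) ≠ 0 :=
    prod_ne_zero_iff.mpr fun a _ => Complex.exp_ne_zero _
  -- rewrite the RHS
  have hRfac : ∀ a : Fin n, sinh (lam a - lam j - η) / sinh (ξ a - lam j - η)
      = (exp (2*(lam j + η)) - exp (2*lam a)) / (exp (2*(lam j + η)) - exp (2*ξ a))
        * (exp (ξ a) / exp (lam a)) := by
    intro a
    rw [h3 a, h1 a]
    have hne1 : exp (2*ξ a) - exp (2*(lam j + η)) ≠ 0 := hxμ a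
    have hne2 : exp (2*(lam j + η)) - exp (2*ξ a) ≠ 0 := fun h => hxμ a (by linear_combination -h)
    have e1 := Complex.exp_ne_zero (lam a)
    have e2 := Complex.exp_ne_zero (ξ a)
    have e3 := Complex.exp_ne_zero (lam j)
    have e4 := Complex.exp_ne_zero η
    field_simp
    ring
  have hRHS : (∏ a : Fin n, sinh (lam a - lam j - η) / sinh (ξ a - lam j - η))
      = ((∏ a : Fin n, (exp (2*(lam j + η)) - exp (2*lam a)))
          / (∏ a : Fin n, (exp (2*(lam j + η)) - exp (2*ξ a))))
        * ((∏ a : Fin n, exp (ξ a)) / (∏ a : Fin n, exp (lam a))) := by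
    rw [prod_congr rfl fun a _ => hRfac a, prod_mul_distrib, prod_div_distrib,
      prod_div_distrib]
  -- put the sum together
  calc ∑ k : Fin n,
        sinh η / (sinh (ξ k - lam j) * sinh (ξ k - lam j - η))
          * ((∏ a : Fin n, sinh (ξ k - lam a))
              / ∏ a ∈ univ.erase k, sinh (ξ k - ξ a))
      = ∑ k : Fin n,
          ((exp (2*η) - 1) * exp (lam j) * (∏ a, exp (ξ a)) / ∏ a ∈ univ.erase j, exp (lam a))
            * ((∏ a ∈ univ.erase j, (exp (2*ξ k) - exp (2*lam a)))
                / ((exp (2*ξ k) - exp (2*(lam j + η)))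
                    * ∏ a ∈ univ.erase k, (exp (2*ξ k) - exp (2*ξ a)))) :=
        Finset.sum_congr rfl fun k _ => hterm k
    _ = ((exp (2*η) - 1) * exp (lam j) * (∏ a, exp (ξ a)) / ∏ a ∈ univ.erase j, exp (lam a))
          * ∑ k : Fin n,
            (∏ a ∈ univ.erase j, (exp (2*ξ k) - exp (2*lam a)))
                / ((exp (2*ξ k) - exp (2*(lam j + η)))
                    * ∏ a ∈ univ.erase k, (exp (2*ξ k) - exp (2*ξ a))) := by
        rw [← Finset.mul_sum]
    _ = ((exp (2*η) - 1) * exp (lam j) * (∏ a, exp (ξ a)) / ∏ a ∈ univ.erase j, exp (lam a))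
          * (-((∏ a ∈ univ.erase j, (exp (2*(lam j + η)) - exp (2*lam a)))
              / ∏ a : Fin n, (exp (2*(lam j + η)) - exp (2*ξ a)))) := by rw [hkey]
    _ = - ∏ a : Fin n, sinh (lam a - lam j - η) / sinh (ξ a - lam j - η) := by
        rw [hRHS]
        have hNm : (∏ a : Fin n, (exp (2*(lam j + η)) - exp (2*lam a)))
            = (exp (2*(lam j + η)) - exp (2*lam j))
              * ∏ a ∈ univ.erase j, (exp (2*(lam j + η)) - exp (2*lam a)) :=
          (mul_prod_erase univ _ (mem_univ j)).symm
        have hMp : (∏ a : Fin n, exp (lam a))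
            = exp (lam j) * ∏ a ∈ univ.erase j, exp (lam a) :=
          (mul_prod_erase univ _ (mem_univ j)).symm
        rw [hNm, hMp]
        have hμeq : exp (2*(lam j + η)) = exp (2*lam j) * exp (2*η) := by
          rw [← Complex.exp_add]; ring_nf
        have hmj : exp (2*lam j) = exp (lam j) * exp (lam j) := by
          rw [← Complex.exp_add]; ring_nf
        linear_combination
          ((∏ a ∈ univ.erase j, (exp (2*(lam j + η)) - exp (2*lam a)))
              * (∏ a : Fin n, exp (ξ a))
              * (∏ a : Fin n, (exp (2*(lam j + η)) - exp (2*ξ a)))⁻¹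
              * (∏ a ∈ univ.erase j, exp (lam a))⁻¹ * (exp (lam j))⁻¹) * hμeq
          + ((∏ a ∈ univ.erase j, (exp (2*(lam j + η)) - exp (2*lam a)))
              * (∏ a : Fin n, exp (ξ a))
              * (∏ a : Fin n, (exp (2*(lam j + η)) - exp (2*ξ a)))⁻¹
              * (∏ a ∈ univ.erase j, exp (lam a))⁻¹ * (exp (lam j))⁻¹
              * (exp (2*η) - 1)) * hmj
          + ((exp (2*η) - 1)
              * ((∏ a ∈ univ.erase j, (exp (2*(lam j + η)) - exp (2*lam a)))
                  * (∏ a : Fin n, exp (ξ a))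
                  * (∏ a : Fin n, (exp (2*(lam j + η)) - exp (2*ξ a)))⁻¹
                  * (∏ a ∈ univ.erase j, exp (lam a))⁻¹)
              * exp (lam j)) * (mul_inv_cancel₀ (Complex.exp_ne_zero (lam j)))
end

section
/- Zero eigenvector of the matrix M̃ at β = 0: define the n×n matrix M̃_{jk} = t(ξ_k, λ_j) + t(λ_j, ξ_k) ∏_{a=1}^{n} [sinh(λ_a - λ_j + η) sinh(λ_j - ξ_a + η)] / [sinh(λ_j - λ_a + η) sinh(ξ_a - λ_j + η)], where t(λ, μ) = sinh η/(sinh(λ-μ) sinh(λ-μ+η)), and define the vector θ_k = ∏_{a=1}^{n} sinh(ξ_k - λ_a) / ∏_{a ≠ k} sinh(ξ_k - ξ_a). Then Σ_{k=1}^{n} M̃_{jk} θ_k = 0 for every j = 1, ..., n. (Conventionally the a = j factor sinh(λ_j - λ_j + η)/sinh(λ_j - λ_j + η) = 1.) -/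
open Complex Finset Polynomial

-- basis coefficient lemma
lemma basis_coeff {ι : Type*} [DecidableEq ι] (s : Finset ι) (v : ι → ℂ) (i : ι)
    (hvs : Set.InjOn v s) (hi : i ∈ s) :
    (Lagrange.basis s v i).coeff (#s - 1) = (∏ j ∈ s.erase i, (v i - v j))⁻¹ := by
  have hmon : (∏ j ∈ s.erase i, (X - C (v j))).Monic :=
    monic_prod_of_monic _ _ fun j _ => monic_X_sub_C _
  have hdeg : (∏ j ∈ s.erase i, (X - C (v j))).natDegree = #s - 1 := by
    rw [natDegree_prod_of_monic _ _ fun j _ => monic_X_sub_C _]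
    simp [card_erase_of_mem hi]
  have : Lagrange.basis s v i
      = C (∏ j ∈ s.erase i, (v i - v j)⁻¹) * ∏ j ∈ s.erase i, (X - C (v j)) := by
    rw [Lagrange.basis, map_prod, ← prod_mul_distrib]
    rfl
  rw [this, coeff_C_mul, ← hdeg, hmon.coeff_natDegree, mul_one, ← prod_inv_distrib]

lemma master {n : ℕ} (u : Fin n → ℂ) (hu : Function.Injective u) (p : ℂ[X])
    (hp : p.degree < n) :
    ∑ k : Fin n, p.eval (u k) / ∏ a ∈ univ.erase k, (u k - u a) = p.coeff (n - 1) := by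
  have hinj : Set.InjOn u (univ : Finset (Fin n)) := hu.injOn
  have hcard : #(univ : Finset (Fin n)) = n := by simp
  have hint := Lagrange.eq_interpolate hinj (by rw [hcard]; exact_mod_cast hp)
  have := congrArg (fun q => Polynomial.coeff q (n - 1)) hint
  simp only [Lagrange.interpolate_apply, finset_sum_coeff, coeff_C_mul] at this
  rw [this]
  refine Finset.sum_congr rfl fun k _ => ?_
  rw [show (n : ℕ) - 1 = #(univ : Finset (Fin n)) - 1 by rw [hcard],
    basis_coeff _ u k hinj (mem_univ k), div_eq_mul_inv]

lemma key1 {n : ℕ} (hn : 1 ≤ n) (u : Fin n → ℂ) (hu : Function.Injective u)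
    (v : Fin n → ℂ) (j : Fin n) :
    ∑ k : Fin n, (∏ a ∈ univ.erase j, (u k - v a)) / ∏ a ∈ univ.erase k, (u k - u a) = 1 := by
  have hmon : (∏ a ∈ univ.erase j, (X - C (v a))).Monic :=
    monic_prod_of_monic _ _ fun a _ => monic_X_sub_C _
  have hdeg : (∏ a ∈ univ.erase j, (X - C (v a))).natDegree = n - 1 := by
    rw [natDegree_prod_of_monic _ _ fun a _ => monic_X_sub_C _]
    simp [card_erase_of_mem (mem_univ j)]
  have hdlt : (∏ a ∈ univ.erase j, (X - C (v a))).degree < (n : WithBot ℕ) := by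
    rw [← natDegree_lt_iff_degree_lt hmon.ne_zero, hdeg]; omega
  have hm := master u hu _ hdlt
  have hcoeff : (∏ a ∈ univ.erase j, (X - C (v a))).coeff (n - 1) = 1 := by
    rw [← hdeg, hmon.coeff_natDegree]
  rw [hcoeff] at hm
  rw [← hm]
  refine Finset.sum_congr rfl fun k _ => ?_
  simp [eval_prod]

lemma key2 {n : ℕ} (hn : 1 ≤ n) (u : Fin n → ℂ) (hu : Function.Injective u)
    (v : Fin n → ℂ) (w : ℂ) (hw : ∀ k, u k - w ≠ 0) :
    ∑ k : Fin n, ((∏ a, (u k - v a)) - ∏ a, (w - v a))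
        / ((u k - w) * ∏ a ∈ univ.erase k, (u k - u a)) = 1 := by
  set c : ℂ := ∏ a, (w - v a) with hc
  set g : ℂ[X] := (∏ a, (X - C (v a))) - C c with hgdef
  have hroot : g.IsRoot w := by
    simp [hgdef, IsRoot, eval_prod, hc]
  have hgp : (X - C w) * (g /ₘ (X - C w)) = g :=
    (mul_divByMonic_eq_iff_isRoot).mpr hroot
  set p : ℂ[X] := g /ₘ (X - C w) with hp
  have hprodmon : (∏ a : Fin n, (X - C (v a))).Monic :=
    monic_prod_of_monic _ _ fun a _ => monic_X_sub_C _
  have hproddeg : (∏ a : Fin n, (X - C (v a))).natDegree = n := by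
    rw [natDegree_prod_of_monic _ _ fun a _ => monic_X_sub_C _]; simp
  have hgmon : g.Monic := by
    refine hprodmon.sub_of_left (lt_of_le_of_lt degree_C_le ?_)
    rw [degree_eq_natDegree hprodmon.ne_zero, hproddeg]
    exact_mod_cast hn
  have hpne : p ≠ 0 := by
    intro h
    rw [h, mul_zero] at hgp
    exact hgmon.ne_zero hgp.symm
  have hgdeg : g.natDegree = n := by rw [hgdef, natDegree_sub_C, hproddeg]
  have hpdeg : p.natDegree = n - 1 := by
    rw [hp, natDegree_divByMonic _ (monic_X_sub_C w), hgdeg, natDegree_X_sub_C]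
  have hplead : p.leadingCoeff = 1 := by
    have := congrArg Polynomial.leadingCoeff hgp
    rw [leadingCoeff_mul, (monic_X_sub_C w).leadingCoeff, one_mul, hgmon.leadingCoeff] at this
    exact this
  have hpcoeff : p.coeff (n - 1) = 1 := by rw [← hpdeg]; exact hplead
  have hdlt : p.degree < (n : WithBot ℕ) := by
    rw [← natDegree_lt_iff_degree_lt hpne, hpdeg]; omega
  have hm := master u hu p hdlt
  rw [hpcoeff] at hm
  rw [← hm]
  refine Finset.sum_congr rfl fun k _ => ?_
  have hev : (u k - w) * p.eval (u k) = (∏ a, (u k - v a)) - c := by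
    have := congrArg (Polynomial.eval (u k)) hgp
    simpa [hgdef, eval_prod] using this
  rw [← hev, mul_div_mul_left _ _ (hw k)]

lemma key3 {n : ℕ} (hn : 1 ≤ n) (u : Fin n → ℂ) (hu : Function.Injective u)
    (w : ℂ) (hw : ∀ k, u k - w ≠ 0) :
    ∑ k : Fin n, 1 / ((u k - w) * ∏ a ∈ univ.erase k, (u k - u a))
      = -1 / ∏ a, (w - u a) := by
  have hd : (∏ a, (w - u a)) ≠ 0 := by
    rw [Finset.prod_ne_zero_iff]
    intro a _ h
    exact hw a (by linear_combination -h)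
  have h2 := key2 hn u hu u w hw
  have he : ∀ k : Fin n, ((∏ a, (u k - u a)) - ∏ a, (w - u a))
        / ((u k - w) * ∏ a ∈ univ.erase k, (u k - u a))
      = (-∏ a, (w - u a)) * (1 / ((u k - w) * ∏ a ∈ univ.erase k, (u k - u a))) := by
    intro k
    rw [Finset.prod_eq_zero (mem_univ k) (sub_self (u k)), zero_sub]
    ring
  rw [Finset.sum_congr rfl (fun k _ => he k), ← Finset.mul_sum] at h2
  rw [eq_div_iff hd]
  linear_combination -h2

lemma key4 {n : ℕ} (hn : 1 ≤ n) (u : Fin n → ℂ) (hu : Function.Injective u)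
    (v : Fin n → ℂ) (w : ℂ) (hw : ∀ k, u k - w ≠ 0) :
    ∑ k : Fin n, (∏ a, (u k - v a)) / ((u k - w) * ∏ a ∈ univ.erase k, (u k - u a))
      = 1 - (∏ a, (w - v a)) / ∏ a, (w - u a) := by
  have hd : (∏ a, (w - u a)) ≠ 0 := by
    rw [Finset.prod_ne_zero_iff]
    intro a _ h
    exact hw a (by linear_combination -h)
  have h2 := key2 hn u hu v w hw
  have h3 := key3 hn u hu w hw
  have he : ∀ k : Fin n, (∏ a, (u k - v a))
        / ((u k - w) * ∏ a ∈ univ.erase k, (u k - u a))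
      = ((∏ a, (u k - v a)) - ∏ a, (w - v a))
          / ((u k - w) * ∏ a ∈ univ.erase k, (u k - u a))
        + (∏ a, (w - v a)) * (1 / ((u k - w) * ∏ a ∈ univ.erase k, (u k - u a))) := by
    intro k
    ring
  rw [Finset.sum_congr rfl (fun k _ => he k), Finset.sum_add_distrib, h2,
    ← Finset.mul_sum, h3]
  field_simp
  ring

lemma core {n : ℕ} (hn : 1 ≤ n) (u v : Fin n → ℂ) (Q : ℂ) (hQ : Q ≠ 0)
    (huinj : Function.Injective u) (j : Fin n)
    (hUV : ∀ k, u k - v j ≠ 0)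
    (hQU : ∀ k, Q * u k - v j ≠ 0)
    (hQVu : ∀ k, Q * v j - u k ≠ 0)
    (hQVv : ∀ a, Q * v j - v a ≠ 0) :
    ∑ k : Fin n,
      ((u k - v j)⁻¹ - Q * (Q * u k - v j)⁻¹
        + (∏ a, ((Q * v a - v j) * (Q * v j - u a) / ((Q * v j - v a) * (Q * u a - v j))))
          * ((u k - Q * v j)⁻¹ - (u k - v j)⁻¹))
        * ((∏ a, (u k - v a)) / ∏ a ∈ univ.erase k, (u k - u a)) = 0 := by
  set Pc : ℂ := ∏ a, ((Q * v a - v j) * (Q * v j - u a) / ((Q * v j - v a) * (Q * u a - v j)))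
    with hPc
  set w1 : ℂ := v j / Q with hw1def
  set w2 : ℂ := Q * v j with hw2def
  have hw1 : ∀ k, u k - w1 ≠ 0 := by
    intro k h
    apply hQU k
    rw [hw1def] at h
    field_simp at h
    linear_combination h
  have hw2 : ∀ k, u k - w2 ≠ 0 := by
    intro k h
    exact hQVu k (by linear_combination -h)
  -- per-k decomposition
  have hsplit : ∀ k : Fin n,
      ((u k - v j)⁻¹ - Q * (Q * u k - v j)⁻¹
        + Pc * ((u k - w2)⁻¹ - (u k - v j)⁻¹))
        * ((∏ a, (u k - v a)) / ∏ a ∈ univ.erase k, (u k - u a))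
      = ((∏ a, (u k - v a)) / ((u k - v j) * ∏ a ∈ univ.erase k, (u k - u a))
          - (∏ a, (u k - v a)) / ((u k - w1) * ∏ a ∈ univ.erase k, (u k - u a)))
        + Pc * ((∏ a, (u k - v a)) / ((u k - w2) * ∏ a ∈ univ.erase k, (u k - u a))
          - (∏ a, (u k - v a)) / ((u k - v j) * ∏ a ∈ univ.erase k, (u k - u a))) := by
    intro k
    have hQinv : Q * (Q * u k - v j)⁻¹ = (u k - w1)⁻¹ := by
      rw [hw1def]
      rw [show u k - v j / Q = (Q * u k - v j) / Q by field_simp, inv_div,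
        div_eq_mul_inv]
    rw [hQinv]
    simp only [div_eq_mul_inv, mul_inv]
    ring
  rw [Finset.sum_congr rfl (fun k _ => hsplit k), Finset.sum_add_distrib,
    Finset.sum_sub_distrib, ← Finset.mul_sum, Finset.sum_sub_distrib]
  -- the three sums
  have hS1 : ∑ k : Fin n, (∏ a, (u k - v a))
      / ((u k - v j) * ∏ a ∈ univ.erase k, (u k - u a)) = 1 := by
    have : ∀ k : Fin n, (∏ a, (u k - v a))
        / ((u k - v j) * ∏ a ∈ univ.erase k, (u k - u a))
        = (∏ a ∈ univ.erase j, (u k - v a)) / ∏ a ∈ univ.erase k, (u k - u a) := by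
      intro k
      rw [← Finset.mul_prod_erase univ (fun a => u k - v a) (mem_univ j),
        mul_div_mul_left _ _ (hUV k)]
    rw [Finset.sum_congr rfl (fun k _ => this k)]
    exact key1 hn u huinj v j
  have hS2 := key4 hn u huinj v w1 hw1
  have hS3 := key4 hn u huinj v w2 hw2
  rw [hS1, hS2, hS3]
  -- final product identity
  have hprod : (∏ a, (w1 - v a)) / (∏ a, (w1 - u a))
      = Pc * ((∏ a, (w2 - v a)) / ∏ a, (w2 - u a)) := by
    rw [hPc, ← Finset.prod_div_distrib, ← Finset.prod_div_distrib,
      ← Finset.prod_mul_distrib]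
    refine Finset.prod_congr rfl fun a _ => ?_
    have h1 : v j - Q * u a ≠ 0 := by
      intro h; exact hQU a (by linear_combination -h)
    have h2 : Q * v j - v a ≠ 0 := hQVv a
    have h3 : Q * v j - u a ≠ 0 := hQVu a
    have h4 := hQU a
    rw [hw1def, hw2def]
    have h5 : v j / Q - u a ≠ 0 := by
      rw [div_sub' hQ]; exact div_ne_zero (by intro h; exact h1 (by linear_combination h)) hQ
    rw [div_mul_div_comm, div_eq_div_iff h5 (by apply_rules [mul_ne_zero])]
    field_simp
    ring
  field_simp at hprod ⊢
  linear_combination hprod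

lemma sinh_exp (x y : ℂ) :
    sinh (x - y) = ((exp x)^2 - (exp y)^2) / (2 * (exp x * exp y)) := by
  rw [show Complex.sinh (x - y) = (exp (x - y) - exp (-(x - y))) / 2 from rfl,
    show -(x-y) = y - x by ring, Complex.exp_sub, Complex.exp_sub]
  field_simp [Complex.exp_ne_zero]

lemma sinh_exp3 (x y z : ℂ) : sinh (x - y + z)
    = ((exp x)^2 * (exp z)^2 - (exp y)^2) / (2 * (exp x * exp y * exp z)) := by
  rw [show x - y + z = (x + z) - y by ring, sinh_exp, Complex.exp_add]
  ring

lemma sinh_ne_num {x y : ℂ} (h : sinh (x - y) ≠ 0) : exp x ^ 2 - exp y ^ 2 ≠ 0 := by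
  intro hc; apply h; rw [sinh_exp, hc, zero_div]

lemma sinh_ne_num3 {x y z : ℂ} (h : sinh (x - y + z) ≠ 0) :
    exp x ^ 2 * exp z ^ 2 - exp y ^ 2 ≠ 0 := by
  intro hc; apply h; rw [sinh_exp3, hc, zero_div]


lemma pcfac (La Lj Xa q : ℂ) (d1 : q ^ 2 * Lj ^ 2 - La ^ 2 ≠ 0) (d2 : q ^ 2 * Xa ^ 2 - Lj ^ 2 ≠ 0)
    (e1 : La ≠ 0) (e2 : Lj ≠ 0) (e3 : Xa ≠ 0) (hq : q ≠ 0) :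
    (La ^ 2 * q ^ 2 - Lj ^ 2) / (2 * (La * Lj * q))
      * ((Lj ^ 2 * q ^ 2 - Xa ^ 2) / (2 * (Lj * Xa * q)))
      / ((Lj ^ 2 * q ^ 2 - La ^ 2) / (2 * (Lj * La * q))
        * ((Xa ^ 2 * q ^ 2 - Lj ^ 2) / (2 * (Xa * Lj * q))))
    = (q ^ 2 * La ^ 2 - Lj ^ 2) * (q ^ 2 * Lj ^ 2 - Xa ^ 2)
      / ((q ^ 2 * Lj ^ 2 - La ^ 2) * (q ^ 2 * Xa ^ 2 - Lj ^ 2)) := by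
  have d1' : Lj ^ 2 * q ^ 2 - La ^ 2 ≠ 0 := fun h => d1 (by linear_combination h)
  have d2' : Xa ^ 2 * q ^ 2 - Lj ^ 2 ≠ 0 := fun h => d2 (by linear_combination h)
  rw [div_mul_div_comm, div_mul_div_comm, div_div_div_eq]
  have hY : 2 * (La * Lj * q) * (2 * (Lj * Xa * q))
      * ((Lj ^ 2 * q ^ 2 - La ^ 2) * (Xa ^ 2 * q ^ 2 - Lj ^ 2)) ≠ 0 := by
    apply_rules [mul_ne_zero, two_ne_zero]
  have hW : (q ^ 2 * Lj ^ 2 - La ^ 2) * (q ^ 2 * Xa ^ 2 - Lj ^ 2) ≠ 0 := mul_ne_zero d1 d2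
  rw [div_eq_div_iff hY hW]
  ring


lemma L1 (E F q : ℂ) (z1 : E^2 - F^2 ≠ 0) (z2 : E^2*q^2 - F^2 ≠ 0)
    (zq : q ≠ 0) (zE : E ≠ 0) (zF : F ≠ 0) :
    (q^2 - 1)/(2*q) / ((E^2-F^2)/(2*(E*F)) * ((E^2*q^2 - F^2)/(2*(E*F*q))))
    = 2*E^2 * ((E^2-F^2)⁻¹ - q^2*(q^2*E^2-F^2)⁻¹) := by
  have z2' : q^2*E^2 - F^2 ≠ 0 := fun h => z2 (by linear_combination h)
  field_simp
  ring

lemma L2 (E F q : ℂ) (z1 : F^2 - E^2 ≠ 0) (z3 : F^2*q^2 - E^2 ≠ 0)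
    (zq : q ≠ 0) (zE : E ≠ 0) (zF : F ≠ 0) :
    (q^2 - 1)/(2*q) / ((F^2-E^2)/(2*(F*E)) * ((F^2*q^2-E^2)/(2*(F*E*q))))
    = 2*E^2 * ((E^2 - q^2*F^2)⁻¹ - (E^2-F^2)⁻¹) := by
  have z1' : E^2 - F^2 ≠ 0 := fun h => z1 (by linear_combination -h)
  have z3' : E^2 - q^2*F^2 ≠ 0 := fun h => z3 (by linear_combination -h)
  have z3'' : q^2*F^2 - E^2 ≠ 0 := fun h => z3 (by linear_combination h)
  field_simp
  ring

lemma L3 (E X Pe Pf N D : ℂ) (zX : X ≠ 0) (zPe : Pe ≠ 0) (zPf : Pf ≠ 0)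
    (zD : D ≠ 0) (zE : E ≠ 0) :
    (N / (X*(2*E) * Pf)) / (D / (X * Pe)) = (Pe * E / Pf) * (N / D) / (2 * E^2) := by
  rw [div_div_div_eq, div_mul_div_comm, div_div]
  rw [div_eq_div_iff (by apply_rules [mul_ne_zero, two_ne_zero])
    (mul_ne_zero (mul_ne_zero zPf zD) (mul_ne_zero two_ne_zero (pow_ne_zero 2 zE)))]
  ring

lemma scalar_core (E F q X Pe Pf N D Pc : ℂ)
    (z1 : E^2 - F^2 ≠ 0) (z2 : E^2*q^2 - F^2 ≠ 0) (z3 : F^2*q^2 - E^2 ≠ 0)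
    (zX : X ≠ 0) (zPe : Pe ≠ 0) (zPf : Pf ≠ 0) (zD : D ≠ 0)
    (zq : q ≠ 0) (zE : E ≠ 0) (zF : F ≠ 0) :
    ((q^2 - 1)/(2*q) / ((E^2-F^2)/(2*(E*F)) * ((E^2*q^2 - F^2)/(2*(E*F*q))))
      + (q^2 - 1)/(2*q) / ((F^2-E^2)/(2*(F*E)) * ((F^2*q^2-E^2)/(2*(F*E*q)))) * Pc)
      * ((N / (X*(2*E) * Pf)) / (D / (X * Pe)))
    = ((Pe * E) / Pf) *
      (((E^2-F^2)⁻¹ - q^2*(q^2*E^2-F^2)⁻¹ + Pc*((E^2 - q^2*F^2)⁻¹ - (E^2-F^2)⁻¹)) * (N/D)) := by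
  have z1' : F^2 - E^2 ≠ 0 := fun h => z1 (by linear_combination -h)
  rw [L1 E F q z1 z2 zq zE zF, L2 E F q z1' z3 zq zE zF, L3 E X Pe Pf N D zX zPe zPf zD zE]
  have h2E : (2:ℂ) * E^2 ≠ 0 := mul_ne_zero two_ne_zero (pow_ne_zero 2 zE)
  rw [← mul_div_assoc, div_eq_iff h2E]
  ring


/-- `θ_k = ∏_a sinh(ξ_k - λ_a) / ∏_{a≠k} sinh(ξ_k - ξ_a)` is a zero-eigenvalue
eigenvector of the matrix `M̃` (the `β = 0` specialization of the matrix (4.18)),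
where `t(λ,μ) = sinh η/(sinh(λ-μ) sinh(λ-μ+η))`. -/
theorem stmt_6 (η : ℂ) (n : ℕ) (hn : 1 ≤ n) (ξ lam : Fin n → ℂ)
    (hξ : ∀ a b : Fin n, a ≠ b → sinh (ξ a - ξ b) ≠ 0)
    (h1 : ∀ j k : Fin n, sinh (ξ k - lam j) ≠ 0)
    (h2 : ∀ j k : Fin n, sinh (ξ k - lam j + η) ≠ 0)
    (h3 : ∀ j k : Fin n, sinh (lam j - ξ k) ≠ 0)
    (h4 : ∀ j k : Fin n, sinh (lam j - ξ k + η) ≠ 0)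
    (h5 : ∀ j a : Fin n, sinh (lam j - lam a + η) ≠ 0)
    (h6 : ∀ j a : Fin n, sinh (ξ a - lam j + η) ≠ 0) (j : Fin n) :
    ∑ k : Fin n,
        (sinh η / (sinh (ξ k - lam j) * sinh (ξ k - lam j + η))
            + sinh η / (sinh (lam j - ξ k) * sinh (lam j - ξ k + η))
              * ∏ a : Fin n,
                  sinh (lam a - lam j + η) * sinh (lam j - ξ a + η)
                    / (sinh (lam j - lam a + η) * sinh (ξ a - lam j + η)))
          * ((∏ a : Fin n, sinh (ξ k - lam a))
              / ∏ a ∈ univ.erase k, sinh (ξ k - ξ a))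
      = 0 := by
  classical
  have hq : exp η ≠ 0 := Complex.exp_ne_zero η
  have hQ : exp η ^ 2 ≠ 0 := pow_ne_zero _ hq
  have huinj : Function.Injective (fun k : Fin n => exp (ξ k) ^ 2) := by
    intro a b hab
    by_contra hne
    exact sinh_ne_num (hξ a b hne) (sub_eq_zero.mpr hab)
  have hUV : ∀ k : Fin n, exp (ξ k) ^ 2 - exp (lam j) ^ 2 ≠ 0 :=
    fun k => sinh_ne_num (h1 j k)
  have hQU : ∀ k : Fin n, exp η ^ 2 * exp (ξ k) ^ 2 - exp (lam j) ^ 2 ≠ 0 := by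
    intro k hc
    exact sinh_ne_num3 (h2 j k) (by linear_combination hc)
  have hQVu : ∀ k : Fin n, exp η ^ 2 * exp (lam j) ^ 2 - exp (ξ k) ^ 2 ≠ 0 := by
    intro k hc
    exact sinh_ne_num3 (h4 j k) (by linear_combination hc)
  have hQVv : ∀ a : Fin n, exp η ^ 2 * exp (lam j) ^ 2 - exp (lam a) ^ 2 ≠ 0 := by
    intro a hc
    exact sinh_ne_num3 (h5 j a) (by linear_combination hc)
  have hcore := core hn (fun k : Fin n => exp (ξ k) ^ 2) (fun a : Fin n => exp (lam a) ^ 2)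
    (exp η ^ 2) hQ huinj j hUV hQU hQVu hQVv
  have hper : ∀ k : Fin n,
      (sinh η / (sinh (ξ k - lam j) * sinh (ξ k - lam j + η))
          + sinh η / (sinh (lam j - ξ k) * sinh (lam j - ξ k + η))
            * ∏ a : Fin n,
                sinh (lam a - lam j + η) * sinh (lam j - ξ a + η)
                  / (sinh (lam j - lam a + η) * sinh (ξ a - lam j + η)))
        * ((∏ a : Fin n, sinh (ξ k - lam a))
            / ∏ a ∈ univ.erase k, sinh (ξ k - ξ a))
      = ((∏ a : Fin n, exp (ξ a)) / ∏ a : Fin n, exp (lam a)) *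
        (((exp (ξ k) ^ 2 - exp (lam j) ^ 2)⁻¹
            - exp η ^ 2 * (exp η ^ 2 * exp (ξ k) ^ 2 - exp (lam j) ^ 2)⁻¹
          + (∏ a : Fin n, ((exp η ^ 2 * exp (lam a) ^ 2 - exp (lam j) ^ 2)
                * (exp η ^ 2 * exp (lam j) ^ 2 - exp (ξ a) ^ 2)
                / ((exp η ^ 2 * exp (lam j) ^ 2 - exp (lam a) ^ 2)
                  * (exp η ^ 2 * exp (ξ a) ^ 2 - exp (lam j) ^ 2))))
              * ((exp (ξ k) ^ 2 - exp η ^ 2 * exp (lam j) ^ 2)⁻¹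
                - (exp (ξ k) ^ 2 - exp (lam j) ^ 2)⁻¹))
          * ((∏ a : Fin n, (exp (ξ k) ^ 2 - exp (lam a) ^ 2))
              / ∏ a ∈ univ.erase k, (exp (ξ k) ^ 2 - exp (ξ a) ^ 2))) := by
    intro k
    have hse : sinh η = (exp η ^ 2 - 1) / (2 * exp η) := by
      have := sinh_exp η 0
      simpa using this
    have hN : (∏ a : Fin n, sinh (ξ k - lam a))
        = (∏ a : Fin n, (exp (ξ k) ^ 2 - exp (lam a) ^ 2))
          / ∏ a : Fin n, (2 * (exp (ξ k) * exp (lam a))) := by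
      rw [← Finset.prod_div_distrib]
      exact Finset.prod_congr rfl fun a _ => sinh_exp _ _
    have hD : (∏ a ∈ univ.erase k, sinh (ξ k - ξ a))
        = (∏ a ∈ univ.erase k, (exp (ξ k) ^ 2 - exp (ξ a) ^ 2))
          / ∏ a ∈ univ.erase k, (2 * (exp (ξ k) * exp (ξ a))) := by
      rw [← Finset.prod_div_distrib]
      exact Finset.prod_congr rfl fun a _ => sinh_exp _ _
    have hPcc : (∏ a : Fin n, (sinh (lam a - lam j + η) * sinh (lam j - ξ a + η)
          / (sinh (lam j - lam a + η) * sinh (ξ a - lam j + η))))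
        = ∏ a : Fin n, ((exp η ^ 2 * exp (lam a) ^ 2 - exp (lam j) ^ 2)
            * (exp η ^ 2 * exp (lam j) ^ 2 - exp (ξ a) ^ 2)
            / ((exp η ^ 2 * exp (lam j) ^ 2 - exp (lam a) ^ 2)
              * (exp η ^ 2 * exp (ξ a) ^ 2 - exp (lam j) ^ 2))) := by
      refine Finset.prod_congr rfl fun a _ => ?_
      rw [sinh_exp3, sinh_exp3, sinh_exp3, sinh_exp3]
      exact pcfac (exp (lam a)) (exp (lam j)) (exp (ξ a)) (exp η) (hQVv a) (hQU a)
        (Complex.exp_ne_zero _) (Complex.exp_ne_zero _) (Complex.exp_ne_zero _) hq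
    have hA : (∏ a : Fin n, (2 * (exp (ξ k) * exp (lam a))))
        = (2 * exp (ξ k)) ^ n * ∏ a : Fin n, exp (lam a) := by
      calc ∏ a : Fin n, (2 * (exp (ξ k) * exp (lam a)))
          = ∏ a : Fin n, ((2 * exp (ξ k)) * exp (lam a)) :=
            Finset.prod_congr rfl fun a _ => by ring
        _ = (2 * exp (ξ k)) ^ n * ∏ a : Fin n, exp (lam a) := by
            rw [Finset.prod_mul_distrib, Finset.prod_const, card_univ, Fintype.card_fin]
    have hB : (∏ a ∈ univ.erase k, (2 * (exp (ξ k) * exp (ξ a))))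
        = (2 * exp (ξ k)) ^ (n - 1) * ∏ a ∈ univ.erase k, exp (ξ a) := by
      calc ∏ a ∈ univ.erase k, (2 * (exp (ξ k) * exp (ξ a)))
          = ∏ a ∈ univ.erase k, ((2 * exp (ξ k)) * exp (ξ a)) :=
            Finset.prod_congr rfl fun a _ => by ring
        _ = (2 * exp (ξ k)) ^ (n - 1) * ∏ a ∈ univ.erase k, exp (ξ a) := by
            rw [Finset.prod_mul_distrib, Finset.prod_const,
              card_erase_of_mem (mem_univ k), card_univ, Fintype.card_fin]
    have hPe : (∏ a : Fin n, exp (ξ a)) = (∏ a ∈ univ.erase k, exp (ξ a)) * exp (ξ k) :=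
      (Finset.prod_erase_mul univ _ (mem_univ k)).symm
    have hpow : (2 * exp (ξ k)) ^ n = (2 * exp (ξ k)) ^ (n - 1) * (2 * exp (ξ k)) := by
      rw [← pow_succ]
      congr 1
      omega
    rw [hse, sinh_exp (ξ k) (lam j), sinh_exp3 (ξ k) (lam j) η,
      sinh_exp (lam j) (ξ k), sinh_exp3 (lam j) (ξ k) η, hPcc, hN, hD, hA, hB, hPe, hpow]
    have z2 : exp (ξ k) ^ 2 * exp η ^ 2 - exp (lam j) ^ 2 ≠ 0 :=
      fun hc => hQU k (by linear_combination hc)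
    have z3 : exp (lam j) ^ 2 * exp η ^ 2 - exp (ξ k) ^ 2 ≠ 0 :=
      fun hc => hQVu k (by linear_combination hc)
    have z9 : (∏ a ∈ univ.erase k, (exp (ξ k) ^ 2 - exp (ξ a) ^ 2)) ≠ 0 := by
      refine Finset.prod_ne_zero_iff.mpr fun a ha => ?_
      exact sinh_ne_num (hξ k a (Ne.symm (Finset.ne_of_mem_erase ha)))
    exact scalar_core (exp (ξ k)) (exp (lam j)) (exp η) ((2 * exp (ξ k)) ^ (n - 1))
      (∏ a ∈ univ.erase k, exp (ξ a)) (∏ a : Fin n, exp (lam a))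
      (∏ a : Fin n, (exp (ξ k) ^ 2 - exp (lam a) ^ 2))
      (∏ a ∈ univ.erase k, (exp (ξ k) ^ 2 - exp (ξ a) ^ 2))
      (∏ a : Fin n, ((exp η ^ 2 * exp (lam a) ^ 2 - exp (lam j) ^ 2)
        * (exp η ^ 2 * exp (lam j) ^ 2 - exp (ξ a) ^ 2)
        / ((exp η ^ 2 * exp (lam j) ^ 2 - exp (lam a) ^ 2)
          * (exp η ^ 2 * exp (ξ a) ^ 2 - exp (lam j) ^ 2))))
      (hUV k) z2 z3
      (pow_ne_zero _ (mul_ne_zero two_ne_zero (Complex.exp_ne_zero _)))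
      (Finset.prod_ne_zero_iff.mpr fun a _ => Complex.exp_ne_zero _)
      (Finset.prod_ne_zero_iff.mpr fun a _ => Complex.exp_ne_zero _)
      z9 hq (Complex.exp_ne_zero _) (Complex.exp_ne_zero _)
  rw [Finset.sum_congr rfl (fun k _ => hper k), ← Finset.mul_sum, hcore, mul_zero]
end

section
/- Vanishing determinant: under the hypotheses of the zero-eigenvector proposition, and assuming additionally that the vector θ is nonzero (which holds since each θ_k ≠ 0 when sinh(ξ_k - λ_a) ≠ 0 for all a), the determinant of the n×n matrix M̃ (defined as above with β = 0) is zero for every n ≥ 1. -/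
open Complex Finset Polynomial

lemma sinh_eq' (u v : ℂ) : Complex.sinh (u - v) = (exp u ^ 2 - exp v ^ 2) / (2 * exp u * exp v) := by
  rw [Complex.sinh, Complex.exp_sub, neg_sub, Complex.exp_sub]
  field_simp [Complex.exp_ne_zero]

lemma sub_ne_of_sinh {u v : ℂ} (h : Complex.sinh (u - v) ≠ 0) : exp u ^ 2 - exp v ^ 2 ≠ 0 := by
  intro h0; exact h (by rw [sinh_eq', h0, zero_div])

lemma keyL (T : Finset ℂ) (P : Polynomial ℂ) (h : P.degree < T.card) :
    ∑ t ∈ T, Polynomial.eval t P * (∏ u ∈ T.erase t, (t - u))⁻¹ = P.coeff (T.card - 1) := by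
  classical
  have hinj : Set.InjOn id (T : Set ℂ) := fun a _ b _ h => h
  have hP := Lagrange.eq_interpolate (f := P) hinj h
  conv_rhs => rw [hP]
  rw [Lagrange.interpolate_apply, Polynomial.finset_sum_coeff]
  refine Finset.sum_congr rfl fun t ht => ?_
  rw [Polynomial.coeff_C_mul]
  congr 1
  have hb : Lagrange.basis T id t
      = Polynomial.C (∏ u ∈ T.erase t, (t - u)⁻¹) * Lagrange.nodal (T.erase t) id := by
    rw [Lagrange.basis, map_prod, Lagrange.nodal, ← Finset.prod_mul_distrib]
    exact Finset.prod_congr rfl fun u _ => rfl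
  rw [hb, Polynomial.coeff_C_mul]
  have h1 : (Lagrange.nodal (T.erase t) id).coeff (T.card - 1) = 1 := by
    have hnd : (Lagrange.nodal (T.erase t) id).natDegree = (T.erase t).card :=
      Lagrange.natDegree_nodal
    rw [show T.card - 1 = (T.erase t).card from (Finset.card_erase_of_mem ht).symm, ← hnd]
    exact Lagrange.nodal_monic.coeff_natDegree
  rw [h1, mul_one, Finset.prod_inv_distrib]

lemma aux_sum {n : ℕ} (x : Fin n → ℂ) (hx : Function.Injective x) (c : ℂ)
    (hc : ∀ k, x k ≠ c) (P : Polynomial ℂ) (hdeg : P.degree < (n : ℕ)) :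
    ∑ k, Polynomial.eval (x k) P * ((x k - c) * ∏ a ∈ univ.erase k, (x k - x a))⁻¹
      = - (Polynomial.eval c P * (∏ a, (c - x a))⁻¹) := by
  classical
  set T : Finset ℂ := insert c (univ.image x) with hT
  have hcT : c ∉ univ.image x := by
    simp only [Finset.mem_image, Finset.mem_univ, true_and, not_exists]
    exact fun k h => hc k h
  have hcard : T.card = n + 1 := by
    rw [hT, Finset.card_insert_of_notMem hcT, Finset.card_image_of_injective _ hx,
      Finset.card_univ, Fintype.card_fin]
  have hdeg' : P.degree < T.card := by
    rw [hcard]; exact lt_trans hdeg (by exact_mod_cast Nat.lt_succ_self n)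
  have hkey := keyL T P hdeg'
  have hcoeff : P.coeff (T.card - 1) = 0 := by
    rw [hcard, Nat.add_sub_cancel]
    exact Polynomial.coeff_eq_zero_of_degree_lt hdeg
  rw [hcoeff, hT, Finset.sum_insert hcT,
    Finset.sum_image (fun a _ b _ h => hx h)] at hkey
  have h1 : T.erase c = univ.image x := by rw [hT, Finset.erase_insert hcT]
  have h2 : ∀ k : Fin n, ∏ u ∈ T.erase (x k), (x k - u)
      = (x k - c) * ∏ a ∈ univ.erase k, (x k - x a) := by
    intro k
    have he : T.erase (x k) = insert c ((univ.erase k).image x) := by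
      rw [hT, Finset.erase_insert_of_ne (hc k).symm, Finset.image_erase hx]
    rw [he, Finset.prod_insert (by
        intro hmem
        exact hcT (Finset.image_subset_image (Finset.erase_subset _ _) hmem)),
      Finset.prod_image (fun a _ b _ h => hx h)]
  have h3 : ∏ u ∈ T.erase c, (c - u) = ∏ a, (c - x a) := by
    rw [h1, Finset.prod_image (fun a _ b _ h => hx h)]
  rw [h3] at hkey
  have h4 : ∑ k, Polynomial.eval (x k) P * (∏ u ∈ T.erase (x k), (x k - u))⁻¹
      = ∑ k, Polynomial.eval (x k) P * ((x k - c) * ∏ a ∈ univ.erase k, (x k - x a))⁻¹ :=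
    Finset.sum_congr rfl fun k _ => by rw [h2 k]
  rw [h4] at hkey
  linear_combination hkey

lemma term_generic (s E M e dL dA dB C2 Q1 Qx : ℂ)
    (hE : E ≠ 0) (he : e ≠ 0)
    (hdL : dL ≠ 0) (hdA : dA ≠ 0) (hdB : dB ≠ 0) (hQx : Qx ≠ 0) :
    (s / (dL / (2*E*M) * (dA / (2*E*(M/e))))
      + s / (-dL / (2*M*E) * (-dB / (2*(M*e)*E))) * C2)
      * ((dL * Q1) / (E^2 * Qx))
    = (4*s*M^2/e) * (Q1 * (dA * Qx)⁻¹)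
      + (4*s*M^2*e*C2) * (Q1 * (dB * Qx)⁻¹) := by
  conv_rhs => rw [← div_eq_mul_inv, ← div_eq_mul_inv, div_mul_div_comm, ← mul_div_assoc,
    div_add_div _ _ (mul_ne_zero he (mul_ne_zero hdA hQx)) (mul_ne_zero hdB hQx)]
  rw [div_mul_div_comm, div_mul_div_comm, div_div_eq_mul_div, div_div_eq_mul_div, neg_mul_neg,
    div_mul_eq_mul_div,
    div_add_div _ _ (mul_ne_zero hdL hdA) (mul_ne_zero hdL hdB),
    div_mul_div_comm,
    div_eq_div_iff
      (mul_ne_zero (mul_ne_zero (mul_ne_zero hdL hdA) (mul_ne_zero hdL hdB))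
        (mul_ne_zero (pow_ne_zero 2 hE) hQx))
      (mul_ne_zero (mul_ne_zero he (mul_ne_zero hdA hQx)) (mul_ne_zero hdB hQx))]
  field_simp
  ring

lemma factor_generic (u v w z Ma Ea Mj e : ℂ)
    (hMa : Ma ≠ 0) (hEa : Ea ≠ 0) (hMj : Mj ≠ 0) (he : e ≠ 0) (hw : w ≠ 0) (hz : z ≠ 0) :
    (u / (2*Ma*(Mj/e))) * (v / (2*(Mj*e)*Ea)) / ((w / (2*(Mj*e)*Ma)) * (z / (2*Ea*(Mj/e))))
      = -u * v / (w * -z) := by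
  have hD1 : (2*Ma*(Mj/e)) ≠ 0 :=
    mul_ne_zero (mul_ne_zero two_ne_zero hMa) (div_ne_zero hMj he)
  have hD2 : (2*(Mj*e)*Ea) ≠ 0 :=
    mul_ne_zero (mul_ne_zero two_ne_zero (mul_ne_zero hMj he)) hEa
  rw [div_mul_div_comm, div_mul_div_comm, div_div_div_eq,
    div_eq_div_iff
      (mul_ne_zero (mul_ne_zero hD1 hD2) (mul_ne_zero hw hz))
      (mul_ne_zero hw (neg_ne_zero.mpr hz))]
  field_simp

lemma final_generic (s e lj A B PA PB X Y C2 : ℂ)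
    (he : e ≠ 0) (hX : X ≠ 0) (hY : Y ≠ 0) (hPB : PB ≠ 0) (hBlj : B - lj ≠ 0)
    (hrel : e^2*(lj - A) = B - lj)
    (hC2 : C2 = ((A - lj) * PA) * Y / (((B - lj) * PB) * X)) :
    (4*s*lj/e) * (-(PA * X⁻¹)) + (4*s*lj*e*C2) * (-(PB * Y⁻¹)) = 0 := by
  subst hC2
  field_simp
  linear_combination (4*s*lj*PA) * hrel

/-- Vanishing determinant: under the hypotheses of the zero-eigenvector
proposition (and `sinh(ξ_k - λ_a) ≠ 0` so that `θ ≠ 0`), the determinant of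
the `n×n` matrix `M̃` (at `β = 0`) vanishes for every `n ≥ 1`. -/
theorem stmt_7 (η : ℂ) (n : ℕ) (hn : 1 ≤ n) (ξ lam : Fin n → ℂ)
    (hξ : ∀ a b : Fin n, a ≠ b → sinh (ξ a - ξ b) ≠ 0)
    (h0 : ∀ k a : Fin n, sinh (ξ k - lam a) ≠ 0)
    (h1 : ∀ j k : Fin n, sinh (ξ k - lam j) ≠ 0)
    (h2 : ∀ j k : Fin n, sinh (ξ k - lam j + η) ≠ 0)
    (h3 : ∀ j k : Fin n, sinh (lam j - ξ k) ≠ 0)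
    (h4 : ∀ j k : Fin n, sinh (lam j - ξ k + η) ≠ 0)
    (h5 : ∀ j a : Fin n, sinh (lam j - lam a + η) ≠ 0)
    (h6 : ∀ j a : Fin n, sinh (ξ a - lam j + η) ≠ 0) :
    Matrix.det (Matrix.of fun j k : Fin n =>
        sinh η / (sinh (ξ k - lam j) * sinh (ξ k - lam j + η))
          + sinh η / (sinh (lam j - ξ k) * sinh (lam j - ξ k + η))
            * ∏ a : Fin n,
                sinh (lam a - lam j + η) * sinh (lam j - ξ a + η)
                  / (sinh (lam j - lam a + η) * sinh (ξ a - lam j + η)))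
      = 0 := by
  classical
  rw [← Matrix.exists_mulVec_eq_zero_iff]
  obtain ⟨x, hx⟩ : ∃ f : Fin n → ℂ, ∀ k, f k = exp (ξ k) ^ 2 := ⟨_, fun _ => rfl⟩
  obtain ⟨l, hl⟩ : ∃ f : Fin n → ℂ, ∀ a, f a = exp (lam a) ^ 2 := ⟨_, fun _ => rfl⟩
  have hxne : ∀ k, x k ≠ 0 := fun k => by
    rw [hx k]; exact pow_ne_zero _ (Complex.exp_ne_zero _)
  have hxx : ∀ k a : Fin n, k ≠ a → x k - x a ≠ 0 := fun k a h => by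
    rw [hx k, hx a]; exact sub_ne_of_sinh (hξ k a h)
  have hxinj : Function.Injective x := by
    intro a b h
    by_contra hne
    exact hxx a b hne (by rw [h, sub_self])
  have hxl : ∀ k a, x k - l a ≠ 0 := fun k a => by
    rw [hx k, hl a]; exact sub_ne_of_sinh (h0 k a)
  refine ⟨fun k => (∏ a, (x k - l a)) / (x k * ∏ a ∈ univ.erase k, (x k - x a)), ?_, ?_⟩
  · -- the vector is nonzero
    intro hzero
    set k0 : Fin n := ⟨0, hn⟩
    have hv := congrFun hzero k0
    simp only [Pi.zero_apply] at hv
    exact (div_ne_zero (Finset.prod_ne_zero_iff.2 fun a _ => hxl k0 a)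
      (mul_ne_zero (hxne k0)
        (Finset.prod_ne_zero_iff.2 fun a ha =>
          hxx k0 a (Ne.symm (Finset.ne_of_mem_erase ha))))) hv
  · funext j
    simp only [Matrix.mulVec, dotProduct, Matrix.of_apply, Pi.zero_apply]
    obtain ⟨A, hA⟩ : ∃ c : ℂ, c = (exp (lam j) / exp η) ^ 2 := ⟨_, rfl⟩
    obtain ⟨B, hB⟩ : ∃ c : ℂ, c = (exp (lam j) * exp η) ^ 2 := ⟨_, rfl⟩
    set P : Polynomial ℂ := Lagrange.nodal (univ.erase j) l with hP
    have hene : exp η ≠ 0 := Complex.exp_ne_zero _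
    have hxA : ∀ k, x k - A ≠ 0 := by
      intro k
      rw [hx k, hA]
      have h := sub_ne_of_sinh (u := ξ k) (v := lam j - η)
        (by rw [show ξ k - (lam j - η) = ξ k - lam j + η by ring]; exact h2 j k)
      rwa [Complex.exp_sub] at h
    have hxB : ∀ k, x k - B ≠ 0 := by
      intro k
      rw [hx k, hB]
      have h := sub_ne_of_sinh (u := lam j + η) (v := ξ k)
        (by rw [show lam j + η - ξ k = lam j - ξ k + η by ring]; exact h4 j k)
      rw [Complex.exp_add] at h
      intro hz; exact h (by linear_combination -hz)
    have hlB : ∀ a, B - l a ≠ 0 := by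
      intro a
      rw [hl a, hB]
      have h := sub_ne_of_sinh (u := lam j + η) (v := lam a)
        (by rw [show lam j + η - lam a = lam j - lam a + η by ring]; exact h5 j a)
      rwa [Complex.exp_add] at h
    have hAx : ∀ a, A - x a ≠ 0 := fun a hz => hxA a (by linear_combination -hz)
    have hBx : ∀ a, B - x a ≠ 0 := fun a hz => hxB a (by linear_combination -hz)
    have hdegP : P.degree < (n : ℕ) := by
      rw [hP, Lagrange.degree_nodal, Finset.card_erase_of_mem (Finset.mem_univ j),
        Finset.card_univ, Fintype.card_fin]
      exact_mod_cast Nat.sub_lt (by omega) one_pos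
    have evalP : ∀ t : ℂ, Polynomial.eval t P = ∏ a ∈ univ.erase j, (t - l a) := by
      intro t; rw [hP]; exact Lagrange.eval_nodal
    have hterm : ∀ k : Fin n,
        (sinh η / (sinh (ξ k - lam j) * sinh (ξ k - lam j + η))
          + sinh η / (sinh (lam j - ξ k) * sinh (lam j - ξ k + η))
            * ∏ a : Fin n,
                sinh (lam a - lam j + η) * sinh (lam j - ξ a + η)
                  / (sinh (lam j - lam a + η) * sinh (ξ a - lam j + η)))
          * ((∏ a, (x k - l a)) / (x k * ∏ a ∈ univ.erase k, (x k - x a)))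
        = (4 * sinh η * exp (lam j) ^ 2 / exp η)
            * (Polynomial.eval (x k) P
                * ((x k - A) * ∏ a ∈ univ.erase k, (x k - x a))⁻¹)
          + (4 * sinh η * exp (lam j) ^ 2 * exp η
              * ∏ a : Fin n,
                  sinh (lam a - lam j + η) * sinh (lam j - ξ a + η)
                    / (sinh (lam j - lam a + η) * sinh (ξ a - lam j + η)))
            * (Polynomial.eval (x k) P
                * ((x k - B) * ∏ a ∈ univ.erase k, (x k - x a))⁻¹) := by
      intro k
      have e1 : sinh (ξ k - lam j) = (x k - l j) / (2 * exp (ξ k) * exp (lam j)) := by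
        rw [sinh_eq', hx k, hl j]
      have e2 : sinh (ξ k - lam j + η)
          = (x k - A) / (2 * exp (ξ k) * (exp (lam j) / exp η)) := by
        rw [show ξ k - lam j + η = ξ k - (lam j - η) by ring, sinh_eq', Complex.exp_sub,
          hx k, hA]
      have e3 : sinh (lam j - ξ k) = -(x k - l j) / (2 * exp (lam j) * exp (ξ k)) := by
        rw [sinh_eq', hx k, hl j, neg_sub]
      have e4 : sinh (lam j - ξ k + η)
          = -(x k - B) / (2 * (exp (lam j) * exp η) * exp (ξ k)) := by
        rw [show lam j - ξ k + η = (lam j + η) - ξ k by ring, sinh_eq', Complex.exp_add,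
          hx k, hB, neg_sub]
      have hsplit : ∏ a, (x k - l a) = (x k - l j) * ∏ a ∈ univ.erase j, (x k - l a) :=
        (Finset.mul_prod_erase univ _ (Finset.mem_univ j)).symm
      have hQx : (∏ a ∈ univ.erase k, (x k - x a)) ≠ 0 :=
        Finset.prod_ne_zero_iff.2 fun a ha => hxx k a (Ne.symm (Finset.ne_of_mem_erase ha))
      have hdL := hxl k j
      have hdA := hxA k
      have hdB := hxB k
      rw [e1, e2, e3, e4, hsplit, ← evalP (x k)]
      rw [hx k] at hdL hdA hdB hQx ⊢
      exact term_generic (sinh η) (exp (ξ k)) (exp (lam j)) (exp η) _ _ _ _ _ _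
        (Complex.exp_ne_zero _) hene hdL hdA hdB hQx
    rw [Finset.sum_congr rfl fun k _ => hterm k, Finset.sum_add_distrib,
      ← Finset.mul_sum, ← Finset.mul_sum,
      aux_sum x hxinj A (fun k => sub_ne_zero.mp (hxA k)) P hdegP,
      aux_sum x hxinj B (fun k => sub_ne_zero.mp (hxB k)) P hdegP]
    -- final scalar identity
    have hfac : ∀ a : Fin n, a ∈ (univ : Finset (Fin n)) →
        sinh (lam a - lam j + η) * sinh (lam j - ξ a + η)
          / (sinh (lam j - lam a + η) * sinh (ξ a - lam j + η))
        = (A - l a) * (B - x a) / ((B - l a) * (A - x a)) := by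
      intro a _
      have f1 : sinh (lam a - lam j + η)
          = (l a - A) / (2 * exp (lam a) * (exp (lam j) / exp η)) := by
        rw [show lam a - lam j + η = lam a - (lam j - η) by ring, sinh_eq', Complex.exp_sub,
          hl a, hA]
      have f2 : sinh (lam j - ξ a + η)
          = (B - x a) / (2 * (exp (lam j) * exp η) * exp (ξ a)) := by
        rw [show lam j - ξ a + η = (lam j + η) - ξ a by ring, sinh_eq', Complex.exp_add,
          hx a, hB]
      have f3 : sinh (lam j - lam a + η)
          = (B - l a) / (2 * (exp (lam j) * exp η) * exp (lam a)) := by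
        rw [show lam j - lam a + η = (lam j + η) - lam a by ring, sinh_eq', Complex.exp_add,
          hl a, hB]
      have f4 : sinh (ξ a - lam j + η)
          = (x a - A) / (2 * exp (ξ a) * (exp (lam j) / exp η)) := by
        rw [show ξ a - lam j + η = ξ a - (lam j - η) by ring, sinh_eq', Complex.exp_sub,
          hx a, hA]
      rw [f1, f2, f3, f4, show A - l a = -(l a - A) by ring, show A - x a = -(x a - A) by ring]
      exact factor_generic _ _ _ _ _ _ _ _ (Complex.exp_ne_zero _) (Complex.exp_ne_zero _)
        (Complex.exp_ne_zero _) hene (hlB a) (fun hz => hAx a (by linear_combination -hz))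
    have hC2 : (∏ a : Fin n,
          sinh (lam a - lam j + η) * sinh (lam j - ξ a + η)
            / (sinh (lam j - lam a + η) * sinh (ξ a - lam j + η)))
        = ((A - exp (lam j) ^ 2) * Polynomial.eval A P) * (∏ a, (B - x a))
            / (((B - exp (lam j) ^ 2) * Polynomial.eval B P) * (∏ a, (A - x a))) := by
      rw [Finset.prod_congr rfl hfac, Finset.prod_div_distrib, Finset.prod_mul_distrib,
        Finset.prod_mul_distrib]
      have hPA : ∏ a, (A - l a) = (A - exp (lam j) ^ 2) * Polynomial.eval A P := by
        rw [evalP A, ← hl j]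
        exact (Finset.mul_prod_erase univ _ (Finset.mem_univ j)).symm
      have hPB : ∏ a, (B - l a) = (B - exp (lam j) ^ 2) * Polynomial.eval B P := by
        rw [evalP B, ← hl j]
        exact (Finset.mul_prod_erase univ _ (Finset.mem_univ j)).symm
      rw [hPA, hPB]
    have hPBne : Polynomial.eval B P ≠ 0 := by
      rw [evalP B]
      exact Finset.prod_ne_zero_iff.2 fun a _ => hlB a
    have hBlj : B - exp (lam j) ^ 2 ≠ 0 := by
      have := hlB j; rwa [hl j] at this
    have hrel : (exp η) ^ 2 * (exp (lam j) ^ 2 - A) = B - exp (lam j) ^ 2 := by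
      rw [hA, hB]
      field_simp
    exact final_generic (sinh η) (exp η) (exp (lam j) ^ 2) A B
      (Polynomial.eval A P) (Polynomial.eval B P) (∏ a, (A - x a)) (∏ a, (B - x a)) _
      hene (Finset.prod_ne_zero_iff.2 fun a _ => hAx a)
      (Finset.prod_ne_zero_iff.2 fun a _ => hBx a) hPBne hBlj hrel hC2
end

section
/- Recursion of the permutation sum at a coincidence point: define for m ≥ 2 the sum L_m(x; y) = Σ_σ (-1)^{sgn(σ)} ∏_{j=1}^{m} [∏_{k=1}^{j-1}(q^{-1}x_{σ(j)} - q y_k) ∏_{k=j+1}^{m}(x_{σ(j)} - y_k)] / ∏_{a>b}(q^{-1}x_{σ(a)} - q x_{σ(b)}), the sum over all permutations σ of {1,...,m}. Then L_m(x_1,...,x_m; y_1,...,y_{m-1}, x_m) = ∏_{a=1}^{m-1} [(x_a - x_m)(q^{-1}x_m - q y_a)/(q^{-1}x_m - q x_a)] · L_{m-1}(x_1,...,x_{m-1}; y_1,...,y_{m-1}). -/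
open Complex Finset Equiv

/-- The alternating permutation sum `L_m(x;y)` of eq. (C.4) (rational form). -/
noncomputable def Lsum (q : ℂ) {m : ℕ} (x y : Fin m → ℂ) : ℂ :=
  ∑ σ : Equiv.Perm (Fin m),
    ((Equiv.Perm.sign σ : ℤ) : ℂ)
      * (∏ j : Fin m,
          (∏ k ∈ univ.filter (fun k => k < j), (q⁻¹ * x (σ j) - q * y k))
            * ∏ k ∈ univ.filter (fun k => j < k), (x (σ j) - y k))
      / ∏ p ∈ univ.filter (fun p : Fin m × Fin m => p.2 < p.1),
          (q⁻¹ * x (σ p.1) - q * x (σ p.2))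

section Aux

def extLast {n : ℕ} (σ : Perm (Fin n)) : Perm (Fin (n+1)) :=
  (Equiv.permCongr finSuccEquivLast.symm) σ.optionCongr

@[simp] lemma extLast_castSucc {n : ℕ} (σ : Perm (Fin n)) (i : Fin n) :
    extLast σ i.castSucc = (σ i).castSucc := by
  simp [extLast, Equiv.permCongr_apply]

@[simp] lemma extLast_last {n : ℕ} (σ : Perm (Fin n)) :
    extLast σ (Fin.last n) = Fin.last n := by
  simp [extLast, Equiv.permCongr_apply]

lemma sign_extLast {n : ℕ} (σ : Perm (Fin n)) :
    Equiv.Perm.sign (extLast σ) = Equiv.Perm.sign σ := by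
  simp [extLast, Equiv.Perm.sign_permCongr, Equiv.optionCongr_sign]

lemma extLast_inj {n : ℕ} : Function.Injective (extLast (n := n)) := by
  intro a b h
  ext i
  have h2 : (a i).castSucc = (b i).castSucc := by
    simpa using congrArg (fun τ : Perm (Fin (n+1)) => τ i.castSucc) h
  exact congrArg Fin.val (Fin.castSucc_injective n h2)

lemma extLast_surj {n : ℕ} (τ : Perm (Fin (n+1))) (hτ : τ (Fin.last n) = Fin.last n) :
    ∃ σ : Perm (Fin n), extLast σ = τ := by
  refine ⟨Equiv.removeNone (finSuccEquivLast.permCongr τ), ?_⟩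
  have hnone : (finSuccEquivLast.permCongr τ) none = none := by
    simp [Equiv.permCongr_apply, hτ]
  have h1 : (Equiv.removeNone (finSuccEquivLast.permCongr τ)).optionCongr
      = finSuccEquivLast.permCongr τ := by
    rw [map_equiv_removeNone, hnone]
    simp
    rfl
  unfold extLast
  rw [h1]
  ext i
  simp [Equiv.permCongr_apply]

variable {M : Type*} [CommMonoid M]

lemma prodlt_castSucc {n : ℕ} (i : Fin n) (F : Fin (n+1) → M) :
    ∏ k ∈ univ.filter (fun k => k < i.castSucc), F k
      = ∏ k ∈ univ.filter (fun k => k < i), F k.castSucc := by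
  rw [prod_filter, prod_filter, Fin.prod_univ_castSucc]
  simp [Fin.castSucc_lt_castSucc_iff, (Fin.castSucc_lt_last i).asymm]

lemma prodgt_castSucc {n : ℕ} (i : Fin n) (F : Fin (n+1) → M) :
    ∏ k ∈ univ.filter (fun k => i.castSucc < k), F k
      = (∏ k ∈ univ.filter (fun k => i < k), F k.castSucc) * F (Fin.last n) := by
  rw [prod_filter, prod_filter, Fin.prod_univ_castSucc]
  simp [Fin.castSucc_lt_castSucc_iff, Fin.castSucc_lt_last i]

lemma prodlt_last {n : ℕ} (F : Fin (n+1) → M) :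
    ∏ k ∈ univ.filter (fun k => k < Fin.last n), F k = ∏ k : Fin n, F k.castSucc := by
  rw [prod_filter, Fin.prod_univ_castSucc]
  simp [Fin.castSucc_lt_last]

lemma prodgt_last {n : ℕ} (F : Fin (n+1) → M) :
    ∏ k ∈ univ.filter (fun k => Fin.last n < k), F k = 1 := by
  rw [prod_filter, Fin.prod_univ_castSucc]
  simp [(Fin.castSucc_lt_last _).asymm]

lemma prodpair_split {n : ℕ} (G : Fin (n+1) → Fin (n+1) → M) :
    ∏ p ∈ univ.filter (fun p : Fin (n+1) × Fin (n+1) => p.2 < p.1), G p.1 p.2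
      = (∏ p ∈ univ.filter (fun p : Fin n × Fin n => p.2 < p.1), G p.1.castSucc p.2.castSucc)
        * ∏ b : Fin n, G (Fin.last n) b.castSucc := by
  rw [prod_filter, prod_filter, Fintype.prod_prod_type, Fintype.prod_prod_type,
    Fin.prod_univ_castSucc (f := fun a => ∏ b, if b < a then G a b else 1)]
  congr 1
  · apply Fintype.prod_congr
    intro a
    rw [Fin.prod_univ_castSucc]
    simp [Fin.castSucc_lt_castSucc_iff, (Fin.castSucc_lt_last a).asymm]
  · rw [Fin.prod_univ_castSucc]
    simp [Fin.castSucc_lt_last]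

end Aux

/-- Recursion of the permutation sum at the coincidence point `y_m = x_m`
(eq. (C.8)): only permutations fixing `m` survive, giving the factorized
recursion. -/
theorem stmt_9 (q : ℂ) (hq : q ≠ 0) (hq2 : q ^ 2 ≠ 1) (n : ℕ) (hn : 1 ≤ n)
    (x : Fin (n + 1) → ℂ) (y : Fin n → ℂ)
    (hqxx : ∀ a b : Fin (n + 1), a ≠ b → q⁻¹ * x a ≠ q * x b) :
    Lsum q x (Fin.snoc y (x (Fin.last n)))
      = (∏ a : Fin n,
          (x a.castSucc - x (Fin.last n)) * (q⁻¹ * x (Fin.last n) - q * y a)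
            / (q⁻¹ * x (Fin.last n) - q * x a.castSucc))
        * Lsum q (fun a : Fin n => x a.castSucc) y := by
  classical
  set Y : Fin (n+1) → ℂ := Fin.snoc y (x (Fin.last n)) with hY
  set F : Perm (Fin (n+1)) → ℂ := fun σ =>
    ((Equiv.Perm.sign σ : ℤ) : ℂ)
      * (∏ j : Fin (n+1),
          (∏ k ∈ univ.filter (fun k => k < j), (q⁻¹ * x (σ j) - q * Y k))
            * ∏ k ∈ univ.filter (fun k => j < k), (x (σ j) - Y k))
      / ∏ p ∈ univ.filter (fun p : Fin (n+1) × Fin (n+1) => p.2 < p.1),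
          (q⁻¹ * x (σ p.1) - q * x (σ p.2)) with hF
  have hLsum : Lsum q x Y = ∑ σ, F σ := rfl
  -- vanishing of the terms with σ (last) ≠ last
  have hvan : ∀ σ : Perm (Fin (n+1)), σ (Fin.last n) ≠ Fin.last n → F σ = 0 := by
    intro σ hσ
    have hjne : σ.symm (Fin.last n) ≠ Fin.last n := by
      intro h
      apply hσ
      conv_lhs => rw [← h]
      exact Equiv.apply_symm_apply σ _
    have hjlt : σ.symm (Fin.last n) < Fin.last n :=
      lt_of_le_of_ne (Fin.le_last _) hjne
    have hnum : (∏ j : Fin (n+1),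
        (∏ k ∈ univ.filter (fun k => k < j), (q⁻¹ * x (σ j) - q * Y k))
          * ∏ k ∈ univ.filter (fun k => j < k), (x (σ j) - Y k)) = 0 := by
      apply Finset.prod_eq_zero (Finset.mem_univ (σ.symm (Fin.last n)))
      have h2 : (∏ k ∈ univ.filter (fun k => σ.symm (Fin.last n) < k),
          (x (σ (σ.symm (Fin.last n))) - Y k)) = 0 := by
        apply Finset.prod_eq_zero (i := Fin.last n)
        · simp [hjlt]
        · rw [Equiv.apply_symm_apply]
          simp [hY]
      rw [h2, mul_zero]
    simp only [hF]
    rw [hnum, mul_zero, zero_div]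
  -- reduce to permutations fixing last
  have hsum : ∑ σ : Perm (Fin (n+1)), F σ = ∑ σ' : Perm (Fin n), F (extLast σ') := by
    rw [← Finset.sum_filter_of_ne
        (p := fun σ : Perm (Fin (n+1)) => σ (Fin.last n) = Fin.last n)
        (fun σ _ h => by by_contra hc; exact h (hvan σ hc))]
    refine (Finset.sum_bij (fun (σ' : Perm (Fin n)) _ => extLast σ') ?_ ?_ ?_ ?_).symm
    · intro a _; simp [Finset.mem_filter]
    · intro a _ b _ h; exact extLast_inj h
    · intro τ hτ
      obtain ⟨σ', h⟩ := extLast_surj τ (Finset.mem_filter.mp hτ).2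
      exact ⟨σ', Finset.mem_univ _, h⟩
    · intro a _; rfl
  -- compute each surviving term
  have hterm : ∀ σ' : Perm (Fin n), F (extLast σ')
      = (∏ a : Fin n,
          (x a.castSucc - x (Fin.last n)) * (q⁻¹ * x (Fin.last n) - q * y a)
            / (q⁻¹ * x (Fin.last n) - q * x a.castSucc))
        * (((Equiv.Perm.sign σ' : ℤ) : ℂ)
          * (∏ j : Fin n,
              (∏ k ∈ univ.filter (fun k => k < j), (q⁻¹ * x (σ' j).castSucc - q * y k))
                * ∏ k ∈ univ.filter (fun k => j < k), (x (σ' j).castSucc - y k))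
          / ∏ p ∈ univ.filter (fun p : Fin n × Fin n => p.2 < p.1),
              (q⁻¹ * x (σ' p.1).castSucc - q * x (σ' p.2).castSucc)) := by
    intro σ'
    simp only [hF, sign_extLast]
    -- split the j-product
    rw [Fin.prod_univ_castSucc
      (f := fun j : Fin (n+1) =>
        (∏ k ∈ univ.filter (fun k => k < j), (q⁻¹ * x (extLast σ' j) - q * Y k))
          * ∏ k ∈ univ.filter (fun k => j < k), (x (extLast σ' j) - Y k))]
    rw [prodpair_split (G := fun a b => q⁻¹ * x (extLast σ' a) - q * x (extLast σ' b))]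
    simp only [extLast_castSucc, extLast_last]
    rw [prodlt_last (F := fun k => q⁻¹ * x (Fin.last n) - q * Y k),
        prodgt_last (F := fun k => x (Fin.last n) - Y k)]
    have hsplit : ∀ i : Fin n,
        (∏ k ∈ univ.filter (fun k => k < i.castSucc), (q⁻¹ * x (σ' i).castSucc - q * Y k))
          * ∏ k ∈ univ.filter (fun k => i.castSucc < k), (x (σ' i).castSucc - Y k)
        = ((∏ k ∈ univ.filter (fun k => k < i), (q⁻¹ * x (σ' i).castSucc - q * y k))
            * ∏ k ∈ univ.filter (fun k => i < k), (x (σ' i).castSucc - y k))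
          * (x (σ' i).castSucc - x (Fin.last n)) := by
      intro i
      rw [prodlt_castSucc (F := fun k => q⁻¹ * x (σ' i).castSucc - q * Y k),
          prodgt_castSucc (F := fun k => x (σ' i).castSucc - Y k)]
      simp only [hY, Fin.snoc_castSucc, Fin.snoc_last]
      ring
    rw [Finset.prod_congr rfl (fun i _ => hsplit i)]
    rw [Finset.prod_mul_distrib]
    have hre1 : ∏ i : Fin n, (x (σ' i).castSucc - x (Fin.last n))
        = ∏ a : Fin n, (x a.castSucc - x (Fin.last n)) :=
      Equiv.prod_comp σ' (fun a => x a.castSucc - x (Fin.last n))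
    have hre2 : ∏ b : Fin n, (q⁻¹ * x (Fin.last n) - q * x (σ' b).castSucc)
        = ∏ a : Fin n, (q⁻¹ * x (Fin.last n) - q * x a.castSucc) :=
      Equiv.prod_comp σ' (fun a => q⁻¹ * x (Fin.last n) - q * x a.castSucc)
    have hysnoc : ∏ k : Fin n, (q⁻¹ * x (Fin.last n) - q * Y k.castSucc)
        = ∏ k : Fin n, (q⁻¹ * x (Fin.last n) - q * y k) := by
      apply Finset.prod_congr rfl
      intro k _
      simp [hY]
    rw [hre1, hre2, hysnoc]
    have hfac : (∏ a : Fin n,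
        (x a.castSucc - x (Fin.last n)) * (q⁻¹ * x (Fin.last n) - q * y a)
          / (q⁻¹ * x (Fin.last n) - q * x a.castSucc))
        = ((∏ a : Fin n, (x a.castSucc - x (Fin.last n)))
            * ∏ a : Fin n, (q⁻¹ * x (Fin.last n) - q * y a))
          / ∏ a : Fin n, (q⁻¹ * x (Fin.last n) - q * x a.castSucc) := by
      rw [Finset.prod_div_distrib, Finset.prod_mul_distrib]
    rw [hfac, div_mul_div_comm]
    congr 1
    · ring
    · ring
  rw [hLsum, hsum, Finset.sum_congr rfl (fun σ' _ => hterm σ'), ← Finset.mul_sum]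
  rfl
end

section
/- Cancellation of poles in the transfer matrix eigenvalue: let λ_1,...,λ_N satisfy the Bethe equations as above. Then the eigenvalue function τ(μ) = ∏_{j=1}^N sinh(λ_j - μ + η)/sinh(λ_j - μ) + d(μ) ∏_{j=1}^N sinh(μ - λ_j + η)/sinh(μ - λ_j) has zero residue at μ = λ_ℓ for each ℓ ∈ {1,...,N}; i.e., the function (μ - λ_ℓ) τ(μ) extends continuously (indeed holomorphically, if d is holomorphic near λ_ℓ) to μ = λ_ℓ with value 0. -/
open Complex Finset Filter Topology

lemma aux_key (c : ℂ) :
    Tendsto (fun z : ℂ => (z - c) / Complex.sinh (z - c)) (𝓝[≠] c) (𝓝 1) := by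
  have h0 : Tendsto (fun z : ℂ => Complex.sinh z / z) (𝓝[≠] (0:ℂ)) (𝓝 1) := by
    have h := Complex.hasDerivAt_sinh (0 : ℂ)
    rw [hasDerivAt_iff_tendsto_slope] at h
    have h' := h
    simp only [slope_fun_def, Complex.sinh_zero, sub_zero, vsub_eq_sub, Complex.cosh_zero] at h'
    simpa [div_eq_inv_mul] using h'
  have h1 : Tendsto (fun z : ℂ => z / Complex.sinh z) (𝓝[≠] (0:ℂ)) (𝓝 1) := by
    have := h0.inv₀ one_ne_zero
    simpa [inv_div] using this
  have h2 : Tendsto (fun z : ℂ => z - c) (𝓝[≠] c) (𝓝[≠] (0:ℂ)) := by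
    apply tendsto_nhdsWithin_of_tendsto_nhds_of_eventually_within
    · have : Tendsto (fun z : ℂ => z - c) (𝓝 c) (𝓝 (c - c)) :=
        (continuous_id.sub continuous_const).continuousAt
      simpa using this.mono_left nhdsWithin_le_nhds
    · filter_upwards [self_mem_nhdsWithin] with z hz
      simpa [Set.mem_compl_iff, sub_eq_zero] using hz
  exact h1.comp h2

/-- Cancellation of poles in the transfer matrix eigenvalue: for Bethe roots
`λ_1,…,λ_N`, the eigenvalue
`τ(μ) = ∏_j sinh(λ_j-μ+η)/sinh(λ_j-μ) + d(μ) ∏_j sinh(μ-λ_j+η)/sinh(μ-λ_j)`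
has zero residue at `μ = λ_ℓ`: `(μ - λ_ℓ) τ(μ) → 0` as `μ → λ_ℓ`. -/
theorem stmt_12 (η : ℂ) (hη : sinh η ≠ 0) (N : ℕ) (hN : 1 ≤ N)
    (d : ℂ → ℂ) (lam : Fin N → ℂ)
    (hd : ∀ l : Fin N, AnalyticAt ℂ d (lam l))
    (hne : ∀ j k : Fin N, j ≠ k → sinh (lam j - lam k) ≠ 0)
    (hneM : ∀ j k : Fin N, j ≠ k → sinh (lam j - lam k - η) ≠ 0)
    (bethe : ∀ j : Fin N,
      d (lam j) * ∏ k ∈ univ.erase j,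
          (sinh (lam j - lam k + η) / sinh (lam j - lam k - η)) = 1)
    (l : Fin N) :
    Tendsto (fun mu : ℂ =>
        (mu - lam l)
          * (∏ j : Fin N, sinh (lam j - mu + η) / sinh (lam j - mu)
              + d mu * ∏ j : Fin N, sinh (mu - lam j + η) / sinh (mu - lam j)))
      (𝓝[≠] lam l) (𝓝 0) := by
  set c := lam l with hc
  set S := (univ : Finset (Fin N)).erase l with hS
  -- the key slope limit
  have hkey := aux_key c
  -- continuity of the erased products
  have hcont1 : Tendsto
      (fun mu : ℂ => ∏ j ∈ S, sinh (lam j - mu + η) / sinh (lam j - mu))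
      (𝓝[≠] c) (𝓝 (∏ j ∈ S, sinh (lam j - c + η) / sinh (lam j - c))) := by
    refine Tendsto.mono_left ?_ nhdsWithin_le_nhds
    refine tendsto_finset_prod _ fun j hj => ?_
    have hj' : j ≠ l := (Finset.mem_erase.mp hj).1
    exact ContinuousAt.div (by fun_prop) (by fun_prop) (hne j l hj')
  have hcont2 : Tendsto
      (fun mu : ℂ => ∏ j ∈ S, sinh (mu - lam j + η) / sinh (mu - lam j))
      (𝓝[≠] c) (𝓝 (∏ j ∈ S, sinh (c - lam j + η) / sinh (c - lam j))) := by
    refine Tendsto.mono_left ?_ nhdsWithin_le_nhds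
    refine tendsto_finset_prod _ fun j hj => ?_
    have hj' : j ≠ l := (Finset.mem_erase.mp hj).1
    have hnz : sinh (c - lam j) ≠ 0 := by
      have := hne j l hj'
      rw [show lam j - c = -(c - lam j) by ring, Complex.sinh_neg, neg_ne_zero] at this
      exact this
    exact ContinuousAt.div (by fun_prop) (by fun_prop) hnz
  have hdc : Tendsto d (𝓝[≠] c) (𝓝 (d c)) :=
    ((hd l).continuousAt).continuousWithinAt.tendsto
  have hsinh1 : Tendsto (fun mu : ℂ => -sinh (c - mu + η)) (𝓝[≠] c) (𝓝 (-sinh η)) := by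
    refine Tendsto.mono_left ?_ nhdsWithin_le_nhds
    have : ContinuousAt (fun mu : ℂ => -sinh (c - mu + η)) c := by fun_prop
    simpa using this.tendsto
  have hsinh2 : Tendsto (fun mu : ℂ => sinh (mu - c + η)) (𝓝[≠] c) (𝓝 (sinh η)) := by
    refine Tendsto.mono_left ?_ nhdsWithin_le_nhds
    have : ContinuousAt (fun mu : ℂ => sinh (mu - c + η)) c := by fun_prop
    simpa using this.tendsto
  -- first summand limit
  have T1 : Tendsto
      (fun mu : ℂ => (mu - c) * ∏ j : Fin N, sinh (lam j - mu + η) / sinh (lam j - mu))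
      (𝓝[≠] c)
      (𝓝 (-sinh η * ∏ j ∈ S, sinh (lam j - c + η) / sinh (lam j - c))) := by
    have heq : ∀ mu : ℂ,
        (mu - c) * ∏ j : Fin N, sinh (lam j - mu + η) / sinh (lam j - mu)
          = ((mu - c) / sinh (mu - c)) * (-sinh (c - mu + η))
            * ∏ j ∈ S, sinh (lam j - mu + η) / sinh (lam j - mu) := by
      intro mu
      rw [← Finset.mul_prod_erase univ _ (Finset.mem_univ l), ← hS, ← hc]
      have hneg : sinh (c - mu) = -sinh (mu - c) := by
        rw [show c - mu = -(mu - c) by ring, Complex.sinh_neg]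
      rw [hneg]
      ring
    have := ((hkey.mul hsinh1).mul hcont1)
    rw [one_mul] at this
    refine (this.congr ?_)
    intro mu; exact (heq mu).symm
  -- second summand limit
  have T2 : Tendsto
      (fun mu : ℂ => (mu - c) * (d mu * ∏ j : Fin N, sinh (mu - lam j + η) / sinh (mu - lam j)))
      (𝓝[≠] c)
      (𝓝 (sinh η * (d c * ∏ j ∈ S, sinh (c - lam j + η) / sinh (c - lam j)))) := by
    have heq : ∀ mu : ℂ,
        (mu - c) * (d mu * ∏ j : Fin N, sinh (mu - lam j + η) / sinh (mu - lam j))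
          = ((mu - c) / sinh (mu - c)) * sinh (mu - c + η)
            * (d mu * ∏ j ∈ S, sinh (mu - lam j + η) / sinh (mu - lam j)) := by
      intro mu
      rw [← Finset.mul_prod_erase univ _ (Finset.mem_univ l), ← hS, ← hc]
      ring
    have := ((hkey.mul hsinh2).mul (hdc.mul hcont2))
    rw [one_mul] at this
    refine (this.congr ?_)
    intro mu; exact (heq mu).symm
  -- the Bethe equation implies the two limits cancel
  have key2 : d c * ∏ j ∈ S, sinh (c - lam j + η) / sinh (c - lam j)
      = ∏ j ∈ S, sinh (lam j - c + η) / sinh (lam j - c) := by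
    have hb := bethe l
    have hsplit : ∀ j ∈ S,
        sinh (c - lam j + η) / sinh (c - lam j)
          = (sinh (c - lam j + η) / sinh (c - lam j - η))
            * (sinh (lam j - c + η) / sinh (lam j - c)) := by
      intro j hj
      have hj' : j ≠ l := (Finset.mem_erase.mp hj).1
      have hm : sinh (c - lam j - η) ≠ 0 := by
        have := hneM l j (Ne.symm hj'); rwa [← hc] at this
      have h1 : sinh (lam j - c + η) = -sinh (c - lam j - η) := by
        rw [show lam j - c + η = -(c - lam j - η) by ring, Complex.sinh_neg]
      have h2 : sinh (lam j - c) = -sinh (c - lam j) := by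
        rw [show lam j - c = -(c - lam j) by ring, Complex.sinh_neg]
      rw [h1, h2, neg_div_neg_eq, div_mul_div_comm, mul_comm (sinh (c - lam j - η)),
        mul_div_mul_right _ _ hm]
    rw [Finset.prod_congr rfl hsplit, Finset.prod_mul_distrib, ← mul_assoc]
    rw [show ∏ j ∈ S, sinh (c - lam j + η) / sinh (c - lam j - η)
        = ∏ k ∈ univ.erase l, sinh (lam l - lam k + η) / sinh (lam l - lam k - η) from rfl]
    rw [hb, one_mul]
  have total := T1.add T2
  rw [key2] at total
  rw [show -sinh η * ∏ j ∈ S, sinh (lam j - c + η) / sinh (lam j - c)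
      + sinh η * ∏ j ∈ S, sinh (lam j - c + η) / sinh (lam j - c) = 0 by ring] at total
  refine total.congr fun mu => ?_
  ring
end

section
/- Vanishing of the sum of residues in a period strip: let G(ω) = ∏_{j=1}^{p} sinh(ω - a_j) / ∏_{k=1}^{q} sinh(ω - b_k) with q ≥ p + 2, p + q even (so G is iπ-periodic), and b_1, ..., b_q pairwise distinct modulo iπℤ. Then Σ_{k=1}^{q} Res_{ω = b_k} G(ω) = 0, i.e., Σ_{k=1}^{q} ∏_{j=1}^{p} sinh(b_k - a_j) / ∏_{l ≠ k} sinh(b_k - b_l) = 0. -/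
open Complex Finset

open Polynomial


lemma sinh_sub_eq' (x y : ℂ) :
    Complex.sinh (x - y) = (Complex.exp (2*x) - Complex.exp (2*y)) / (2 * Complex.exp x * Complex.exp y) := by
  have hx := Complex.exp_ne_zero x
  have hy := Complex.exp_ne_zero y
  simp only [Complex.sinh, neg_sub, Complex.exp_sub, two_mul, Complex.exp_add]
  field_simp
  ring_nf

lemma key_lemma {ι : Type*} [DecidableEq ι] {s : Finset ι} {v : ι → ℂ}
    (hvs : Set.InjOn v s) (f : ℂ[X]) (hf : f.degree < ((#s - 1 : ℕ) : WithBot ℕ)) :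
    ∑ i ∈ s, f.eval (v i) * Lagrange.nodalWeight s v i = 0 := by
  have hfs : f.degree < (#s : ℕ) := hf.trans_le (by exact_mod_cast Nat.sub_le _ _)
  have h := Lagrange.eq_interpolate hvs hfs
  have hc : ((Lagrange.interpolate s v) fun i => f.eval (v i)).coeff (#s - 1) = 0 := by
    rw [← h]; exact Polynomial.coeff_eq_zero_of_degree_lt hf
  rw [Lagrange.interpolate_apply, Polynomial.finset_sum_coeff] at hc
  rw [← hc]
  refine sum_congr rfl fun i hi => ?_
  rw [Polynomial.coeff_C_mul]
  congr 1
  have hd := Lagrange.natDegree_basis hvs hi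
  have h2 : (Lagrange.basis s v i).coeff (#s-1) = (Lagrange.basis s v i).leadingCoeff := by
    rw [Polynomial.leadingCoeff, hd]
  rw [h2, Lagrange.basis, Polynomial.leadingCoeff_prod, Lagrange.nodalWeight]
  exact prod_congr rfl fun j hj => by
    rw [Lagrange.basisDivisor, Polynomial.leadingCoeff_mul, Polynomial.leadingCoeff_C,
      (Polynomial.monic_X_sub_C _).leadingCoeff, mul_one]

/-- Vanishing of the sum of residues of
`G(ω) = ∏_j sinh(ω - a_j) / ∏_k sinh(ω - b_k)` in a period strip:
for `q ≥ p + 2` and `p + q` even,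
`∑_k ∏_j sinh(b_k - a_j) / ∏_{l ≠ k} sinh(b_k - b_l) = 0`. -/
theorem stmt_14 (p q : ℕ) (hpq : p + 2 ≤ q) (hpar : Even (p + q))
    (a : Fin p → ℂ) (b : Fin q → ℂ)
    (hb : ∀ k l : Fin q, k ≠ l → sinh (b k - b l) ≠ 0) :
    ∑ k : Fin q,
        (∏ j : Fin p, sinh (b k - a j))
          / ∏ l ∈ univ.erase k, sinh (b k - b l) = 0 := by
  obtain ⟨m, hm⟩ : ∃ m, q = p + 2 + 2 * m := by
    obtain ⟨r, hr⟩ := hpar; exact ⟨(q - p - 2) / 2, by omega⟩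
  set z : Fin q → ℂ := fun k => Complex.exp (2 * b k) with hzdef
  set w : Fin p → ℂ := fun j => Complex.exp (2 * a j) with hwdef
  have hzne : ∀ k l : Fin q, k ≠ l → z k ≠ z l := by
    intro k l hkl heq
    apply hb k l hkl
    rw [sinh_sub_eq', show Complex.exp (2 * b k) = Complex.exp (2 * b l) from heq,
      sub_self, zero_div]
  have hDn : ∀ k : Fin q, ∀ l ∈ univ.erase k, z k - z l ≠ 0 := by
    intro k l hl
    exact sub_ne_zero_of_ne (hzne k l (Finset.ne_of_mem_erase hl).symm)
  set f : ℂ[X] := X ^ m * ∏ j : Fin p, (X - C (w j)) with hfdef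
  have hfeval : ∀ x : ℂ, f.eval x = x ^ m * ∏ j : Fin p, (x - w j) := by
    intro x; simp [hfdef, eval_prod]
  have hfdeg : f.degree = ((m + p : ℕ) : WithBot ℕ) := by
    rw [hfdef, Polynomial.degree_mul, Polynomial.degree_X_pow, Polynomial.degree_prod]
    simp [Polynomial.degree_X_sub_C]
  set C0 : ℂ := 2 ^ (2 * m + 1) * (∏ l : Fin q, Complex.exp (b l)) / (∏ j : Fin p, Complex.exp (a j)) with hC0
  have key : ∀ k : Fin q,
      (∏ j : Fin p, sinh (b k - a j)) / ∏ l ∈ univ.erase k, sinh (b k - b l)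
        = C0 * (f.eval (z k) * Lagrange.nodalWeight univ z k) := by
    intro k
    have hBk := Complex.exp_ne_zero (b k)
    have hA : (∏ j : Fin p, Complex.exp (a j)) ≠ 0 := prod_ne_zero_iff.mpr fun j _ => Complex.exp_ne_zero _
    have hDk : (∏ l ∈ univ.erase k, (Complex.exp (2 * b k) - Complex.exp (2 * b l))) ≠ 0 := by
      refine prod_ne_zero_iff.mpr fun l hl => ?_
      exact hDn k l hl
    have hcard : q - 1 = p + 2 * m + 1 := by omega
    have hBall : (∏ l ∈ univ.erase k, Complex.exp (b l))
        = (∏ l : Fin q, Complex.exp (b l)) / Complex.exp (b k) := by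
      rw [eq_div_iff hBk, mul_comm]
      exact Finset.mul_prod_erase univ (fun l => Complex.exp (b l)) (mem_univ k)
    have hzk : Complex.exp (2 * b k) ^ m = Complex.exp (b k) ^ (2 * m) := by
      rw [two_mul, Complex.exp_add, ← sq, ← pow_mul, two_mul]
    simp only [sinh_sub_eq', prod_div_distrib, hfeval, Lagrange.nodalWeight, hzdef, hwdef, hC0]
    rw [Finset.prod_inv_distrib]
    simp only [Finset.prod_mul_distrib, Finset.prod_const, Finset.card_univ, Fintype.card_fin,
      Finset.card_erase_of_mem (Finset.mem_univ k)]
    rw [hcard, hBall, hzk]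
    field_simp
    ring
  rw [Finset.sum_congr rfl fun k _ => key k, ← Finset.mul_sum]
  have hinj : Set.InjOn z (univ : Finset (Fin q)) := fun k _ l _ h => by
    by_contra hne; exact hzne k l hne h
  have hdeg : f.degree < (((#(univ : Finset (Fin q))) - 1 : ℕ) : WithBot ℕ) := by
    rw [hfdeg]
    simp only [card_univ, Fintype.card_fin]
    exact_mod_cast (show m + p < q - 1 by omega)
  rw [key_lemma hinj f hdeg, mul_zero]
end
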